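/- arXiv:chao-dyn/9603017 — 10 statements merged into one kernel-verified Lean document; each statement's English description precedes it below -/
import Mathlib

section
/- Let (a_n)_{n≥1} be a sequence of complex numbers such that the power series Σ_{n≥1} (a_n/n) z^n has positive radius of convergence, and define R(z) = exp(Σ_{n≥1} (a_n/n) z^n) on a neighborhood of 0. Then R(z) coincides on some neighborhood of 0 with a rational function (a quotient of two complex polynomials) if and only if there exist finitely many complex numbers α_1,…,α_s and β_1,…,β_t such that a_n = Σ_{j=1}^t β_j^n − Σ_{i=1}^s α_i^n for every n ≥ 1. -/
/-!
If `aₙ = ∑ⱼ βⱼⁿ - ∑ᵢ αᵢⁿ`, summing the series `-log (1 - w) = ∑ wⁿ / n` termwise gives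
`R z = ∏ᵢ (1 - αᵢ z) / ∏ⱼ (1 - βⱼ z)`. Conversely, if `R q = p` near `0`, then `R 0 = 1` forces
`p` and `q` to vanish to the same order at `0`; after cancelling that power of `z`,
`p = c ∏ᵢ (1 - αᵢ z)` and `q = c ∏ⱼ (1 - βⱼ z)` with `αᵢ`, `βⱼ` the inverse roots. The logarithm
of `R` and the one built from these `αᵢ`, `βⱼ` then have the same exponential and both vanish at
`0`, so they agree near `0`, and uniqueness of power series expansions identifies the `aₙ`.
-/

open Complex Polynomial Filter Topology

noncomputable def logZeta (a : ℕ → ℂ) (z : ℂ) : ℂ :=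
  ∑' n : ℕ, a (n + 1) / ((n : ℂ) + 1) * z ^ (n + 1)

def powerSumDiff {ι κ : Type*} [Fintype ι] [Fintype κ] (α : ι → ℂ) (β : κ → ℂ) (n : ℕ) : ℂ :=
  ∑ j, β j ^ n - ∑ i, α i ^ n

theorem logZeta_zero (a : ℕ → ℂ) : logZeta a 0 = 0 := by
  simp [logZeta]

theorem hasFPowerSeriesAt_logZeta {a : ℕ → ℂ}
    (ha : ∀ᶠ z in 𝓝 0, Summable fun n : ℕ => a (n + 1) / ((n : ℂ) + 1) * z ^ (n + 1)) :
    HasFPowerSeriesAt (logZeta a) (FormalMultilinearSeries.ofScalars ℂ fun n => a n / n) 0 := by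
  -- the constant coefficient is `a 0 / 0 = 0`
  rw [hasFPowerSeriesAt_iff]
  filter_upwards [ha] with z hz
  simp only [FormalMultilinearSeries.coeff_ofScalars, zero_add, smul_eq_mul]
  refine (hasSum_nat_add_iff' 1).1 ?_
  simpa [logZeta, mul_comm] using hz.hasSum

theorem eq_of_logZeta_eventuallyEq {a b : ℕ → ℂ}
    (ha : ∀ᶠ z in 𝓝 0, Summable fun n : ℕ => a (n + 1) / ((n : ℂ) + 1) * z ^ (n + 1))
    (hb : ∀ᶠ z in 𝓝 0, Summable fun n : ℕ => b (n + 1) / ((n : ℂ) + 1) * z ^ (n + 1))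
    (hab : logZeta a =ᶠ[𝓝 0] logZeta b) {n : ℕ} (hn : 1 ≤ n) : a n = b n := by
  have h := congrFun (FormalMultilinearSeries.ofScalars_series_injective ℂ ℂ
    ((hasFPowerSeriesAt_logZeta ha).eq_formalMultilinearSeries_of_eventually
      (hasFPowerSeriesAt_logZeta hb) hab)) n
  rwa [div_left_inj' (Nat.cast_ne_zero.2 (by omega))] at h

theorem hasSum_pow_succ_div_succ_neg_log {w : ℂ} (hw : ‖w‖ < 1) :
    HasSum (fun n : ℕ => w ^ (n + 1) / ((n : ℂ) + 1)) (-log (1 - w)) := by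
  simpa using (hasSum_nat_add_iff' 1).2 (hasSum_taylorSeries_neg_log hw)

section PowerSumDiff

variable {ι κ : Type*} [Fintype ι] [Fintype κ] (α : ι → ℂ) (β : κ → ℂ)

theorem hasSum_powerSumDiff {z : ℂ} (hα : ∀ i, ‖α i * z‖ < 1) (hβ : ∀ j, ‖β j * z‖ < 1) :
    HasSum (fun n : ℕ => powerSumDiff α β (n + 1) / ((n : ℂ) + 1) * z ^ (n + 1))
      (∑ j, -log (1 - β j * z) - ∑ i, -log (1 - α i * z)) := by
  refine ((hasSum_sum fun j _ => hasSum_pow_succ_div_succ_neg_log (hβ j)).sub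
    (hasSum_sum fun i _ => hasSum_pow_succ_div_succ_neg_log (hα i))).congr_fun fun n => ?_
  simp only [powerSumDiff, mul_pow, sub_div, sub_mul, Finset.sum_div, Finset.sum_mul]
  congr 1 <;> exact Finset.sum_congr rfl fun _ _ => by ring

theorem eventually_norm_mul_lt_one : ∀ᶠ z in 𝓝 (0 : ℂ), ∀ i, ‖α i * z‖ < 1 :=
  eventually_all.2 fun i => (continuous_const.mul continuous_id).norm.tendsto' 0 0 (by simp)
    |>.eventually_lt_const one_pos

theorem eventually_summable_powerSumDiff :
    ∀ᶠ z in 𝓝 0, Summable fun n : ℕ => powerSumDiff α β (n + 1) / ((n : ℂ) + 1) * z ^ (n + 1) := by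
  filter_upwards [eventually_norm_mul_lt_one α, eventually_norm_mul_lt_one β] with z hα hβ
  exact (hasSum_powerSumDiff α β hα hβ).summable

theorem eventually_exp_logZeta_powerSumDiff_mul :
    ∀ᶠ z in 𝓝 0, exp (logZeta (powerSumDiff α β) z) * ∏ j, (1 - β j * z) = ∏ i, (1 - α i * z) := by
  filter_upwards [eventually_norm_mul_lt_one α, eventually_norm_mul_lt_one β] with z hα hβ
  have one_sub_ne_zero {w : ℂ} (hw : ‖w‖ < 1) : 1 - w ≠ 0 :=
    sub_ne_zero.2 fun h => by simp [← h] at hw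
  have exp_neg_log {w : ℂ} (hw : ‖w‖ < 1) : exp (-log (1 - w)) = (1 - w)⁻¹ := by
    rw [exp_neg, exp_log (one_sub_ne_zero hw)]
  rw [logZeta, (hasSum_powerSumDiff α β hα hβ).tsum_eq, exp_sub, exp_sum, exp_sum]
  simp only [exp_neg_log, hα, hβ, Finset.prod_inv_distrib]
  rw [inv_div_inv, div_mul_cancel₀ _ (Finset.prod_ne_zero_iff.2 fun j _ => one_sub_ne_zero (hβ j))]

end PowerSumDiff

theorem eventually_eq_of_exp_eventually_eq {X : Type*} {l : Filter X} {f g : X → ℂ} {w : ℂ}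
    (hw : w.im ∈ Set.Ioo (-Real.pi) Real.pi) (hf : Tendsto f l (𝓝 w)) (hg : Tendsto g l (𝓝 w))
    (h : ∀ᶠ x in l, exp (f x) = exp (g x)) : ∀ᶠ x in l, f x = g x := by
  have hU : im ⁻¹' Set.Ioo (-Real.pi) Real.pi ∈ 𝓝 w :=
    (isOpen_Ioo.preimage continuous_im).mem_nhds hw
  have log_exp_of_mem {v : ℂ} (hv : v ∈ im ⁻¹' Set.Ioo (-Real.pi) Real.pi) : log (exp v) = v :=
    log_exp hv.1 hv.2.le
  filter_upwards [hf hU, hg hU, h] with x hfx hgx hx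
  rw [← log_exp_of_mem hfx, ← log_exp_of_mem hgx, hx]

theorem Polynomial.analyticAt_eval {𝕜 : Type*} [NontriviallyNormedField 𝕜] (p : 𝕜[X]) (x : 𝕜) :
    AnalyticAt 𝕜 (fun z => p.eval z) x := by
  simpa using analyticAt_id.aeval_polynomial (𝕜 := 𝕜) (z := x) (A := 𝕜) p

theorem Polynomial.analyticOrderAt_eval {𝕜 : Type*} [NontriviallyNormedField 𝕜] {p : 𝕜[X]}
    (hp : p ≠ 0) (x : 𝕜) : analyticOrderAt (fun z => p.eval z) x = p.rootMultiplicity x := by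
  refine (p.analyticAt_eval x).analyticOrderAt_eq_natCast.2
    ⟨_, analyticAt_eval _ x, eval_divByMonic_pow_rootMultiplicity_ne_zero x hp, .of_forall fun z => ?_⟩
  conv_lhs => rw [← p.pow_mul_divByMonic_rootMultiplicity_eq x]
  simp

theorem exists_eval_ne_zero_of_eventually_mul_eval_eq {𝕜 : Type*} [NontriviallyNormedField 𝕜]
    {u : 𝕜 → 𝕜} {x : 𝕜} (hu : AnalyticAt 𝕜 u x) (hux : u x ≠ 0) {p q : 𝕜[X]} (hq : q ≠ 0)
    (h : ∀ᶠ z in 𝓝 x, u z * q.eval z = p.eval z) :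
    ∃ P Q : 𝕜[X], P.eval x ≠ 0 ∧ Q.eval x ≠ 0 ∧ ∀ᶠ z in 𝓝 x, u z * Q.eval z = P.eval z := by
  have hord : analyticOrderAt (fun z => p.eval z) x = q.rootMultiplicity x := calc
    _ = analyticOrderAt (u * fun z => q.eval z) x := (analyticOrderAt_congr h).symm
    _ = analyticOrderAt u x + analyticOrderAt (fun z => q.eval z) x :=
      analyticOrderAt_mul hu (q.analyticAt_eval x)
    _ = q.rootMultiplicity x := by
      rw [hu.analyticOrderAt_eq_zero.2 hux, zero_add, q.analyticOrderAt_eval hq x]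
  have hp : p ≠ 0 := by
    rintro rfl
    simp [analyticOrderAt_eq_top.2] at hord
  have hk : p.rootMultiplicity x = q.rootMultiplicity x := by
    rw [p.analyticOrderAt_eval hp] at hord
    exact_mod_cast hord
  set k := q.rootMultiplicity x
  set P := p /ₘ (X - C x) ^ k
  set Q := q /ₘ (X - C x) ^ k
  have hpP : (X - C x) ^ k * P = p := by
    simpa only [hk] using p.pow_mul_divByMonic_rootMultiplicity_eq x
  refine ⟨P, Q, by simpa only [hk] using eval_divByMonic_pow_rootMultiplicity_ne_zero x hp,
    eval_divByMonic_pow_rootMultiplicity_ne_zero x hq, ?_⟩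
  have hcont : ContinuousAt (fun z => u z * Q.eval z) x :=
    hu.continuousAt.mul (Q.analyticAt_eval x).continuousAt
  refine (hcont.eventuallyEq_nhds_iff_eventuallyEq_nhdsNE
    (P.analyticAt_eval x).continuousAt).1 ?_
  filter_upwards [nhdsWithin_le_nhds h, self_mem_nhdsWithin] with z hz hzx
  have hpz := congrArg (eval z) hpP
  have hqz := congrArg (eval z) (q.pow_mul_divByMonic_rootMultiplicity_eq x)
  simp only [eval_mul, eval_pow, eval_sub, eval_X, eval_C] at hpz hqz
  refine mul_left_cancel₀ (pow_ne_zero k (sub_ne_zero.2 hzx)) ?_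
  linear_combination u z * hqz - hpz + hz

theorem Polynomial.exists_eq_C_eval_zero_mul_prod_one_sub {K : Type*} [Field K] [IsAlgClosed K]
    {P : K[X]} (hP : P.eval 0 ≠ 0) :
    ∃ (s : ℕ) (α : Fin s → K), P = C (P.eval 0) * ∏ i, (1 - C (α i) * X) := by
  have hfactor : P = C (P.leadingCoeff * (P.roots.map (-·)).prod) *
      (P.roots.map fun ρ => 1 - C ρ⁻¹ * X).prod := by
    conv_lhs => rw [(IsAlgClosed.splits P).eq_prod_roots]
    rw [C_mul, mul_assoc, map_multiset_prod, Multiset.map_map, ← Multiset.prod_map_mul]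
    congr 2
    refine Multiset.map_congr rfl fun ρ hρ => ?_
    have hρ0 : ρ ≠ 0 := by
      rintro rfl
      exact hP (isRoot_of_mem_roots hρ)
    simp only [Function.comp_apply, map_neg, mul_sub, mul_one, ← mul_assoc, ← C_mul, neg_mul,
      mul_inv_cancel₀ hρ0, C_1]
    ring
  set L := (P.roots.map (·⁻¹)).toList
  have hL : ∏ i : Fin L.length, (1 - C L[(i : ℕ)] * X) =
      (P.roots.map fun ρ => 1 - C ρ⁻¹ * X).prod := by
    rw [Fin.prod_univ_fun_getElem L fun α => 1 - C α * X, ← Multiset.prod_coe, ← Multiset.map_coe,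
      Multiset.coe_toList, Multiset.map_map]
    rfl
  have hM0 : (P.roots.map fun ρ => 1 - C ρ⁻¹ * X).prod.eval 0 = 1 := by
    simp [eval_multiset_prod]
  generalize (P.roots.map fun ρ => 1 - C ρ⁻¹ * X).prod = M at hfactor hL hM0
  generalize P.leadingCoeff * _ = c at hfactor
  have hc : P.eval 0 = c := by rw [hfactor, eval_mul, eval_C, hM0, mul_one]
  exact ⟨L.length, fun i => L[(i : ℕ)], by rw [hL, hc, ← hfactor]⟩

theorem exists_powerSumDiff_of_eventually_exp_logZeta_mul_eval_eq {a : ℕ → ℂ}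
    (ha : ∀ᶠ z in 𝓝 0, Summable fun n : ℕ => a (n + 1) / ((n : ℂ) + 1) * z ^ (n + 1))
    {p q : ℂ[X]} (hq : q ≠ 0) (h : ∀ᶠ z in 𝓝 0, exp (logZeta a z) * q.eval z = p.eval z) :
    ∃ (s t : ℕ) (α : Fin s → ℂ) (β : Fin t → ℂ), ∀ n, 1 ≤ n → a n = powerSumDiff α β n := by
  have hF := hasFPowerSeriesAt_logZeta ha
  obtain ⟨P, Q, hP0, hQ0, hPQ⟩ :=
    exists_eval_ne_zero_of_eventually_mul_eval_eq hF.analyticAt.cexp (exp_ne_zero _) hq h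
  have hPQ0 : P.eval 0 = Q.eval 0 := by simpa [logZeta_zero] using hPQ.self_of_nhds.symm
  obtain ⟨s, α, hα⟩ := exists_eq_C_eval_zero_mul_prod_one_sub hP0
  obtain ⟨t, β, hβ⟩ := exists_eq_C_eval_zero_mul_prod_one_sub hQ0
  have hG := hasFPowerSeriesAt_logZeta (eventually_summable_powerSumDiff α β)
  have hexp : ∀ᶠ z in 𝓝 0, exp (logZeta a z) = exp (logZeta (powerSumDiff α β) z) := by
    filter_upwards [hPQ, eventually_exp_logZeta_powerSumDiff_mul α β,
      (Q.analyticAt_eval 0).continuousAt.eventually_ne hQ0] with z hz hzG hQz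
    refine mul_right_cancel₀ hQz (hz.trans ?_)
    rw [hα, hβ, hPQ0]
    simp only [eval_mul, eval_C, eval_prod, eval_sub, eval_one, eval_X, ← hzG]
    ring
  have hFG : logZeta a =ᶠ[𝓝 0] logZeta (powerSumDiff α β) :=
    eventually_eq_of_exp_eventually_eq (w := 0) (by simp [Real.pi_pos])
      (by simpa [logZeta_zero] using hF.continuousAt.tendsto)
      (by simpa [logZeta_zero] using hG.continuousAt.tendsto) hexp
  exact ⟨s, t, α, β, fun n hn =>
    eq_of_logZeta_eventuallyEq ha (eventually_summable_powerSumDiff α β) hFG hn⟩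

/-- If the power series `Σ_{n≥1} (aₙ/n) zⁿ` has positive radius of
convergence and `R(z) = exp(Σ_{n≥1} (aₙ/n) zⁿ)`, then `R` coincides near `0` with a rational
function iff there are finitely many complex numbers `α₁,…,α_s`, `β₁,…,β_t` with
`aₙ = Σⱼ βⱼⁿ − Σᵢ αᵢⁿ` for all `n ≥ 1`. -/
theorem reidemeister_zeta_rational_iff_coeffs_exponential_sums (a : ℕ → ℂ)
    (hconv : ∃ r : ℝ, 0 < r ∧ ∀ z : ℂ, ‖z‖ < r →
      Summable (fun n : ℕ => a (n + 1) / ((n : ℂ) + 1) * z ^ (n + 1))) :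
    (∃ (p q : Polynomial ℂ), q ≠ 0 ∧
      ∀ᶠ z in nhds (0 : ℂ),
        Complex.exp (∑' n : ℕ, a (n + 1) / ((n : ℂ) + 1) * z ^ (n + 1)) * q.eval z
          = p.eval z) ↔
    (∃ (s t : ℕ) (α : Fin s → ℂ) (β : Fin t → ℂ),
      ∀ n : ℕ, 1 ≤ n → a n = (∑ j, β j ^ n) - ∑ i, α i ^ n) := by
  constructor
  · rintro ⟨p, q, hq, h⟩
    obtain ⟨r, hr, hsum⟩ := hconv
    have ha : ∀ᶠ z in 𝓝 0, Summable fun n : ℕ => a (n + 1) / ((n : ℂ) + 1) * z ^ (n + 1) :=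
      eventually_of_mem (Metric.ball_mem_nhds 0 hr) fun z hz => hsum z (mem_ball_zero_iff.1 hz)
    exact exists_powerSumDiff_of_eventually_exp_logZeta_mul_eval_eq ha hq h
  · rintro ⟨s, t, α, β, hab⟩
    have hlog (z : ℂ) : ∑' n : ℕ, a (n + 1) / ((n : ℂ) + 1) * z ^ (n + 1) =
        logZeta (powerSumDiff α β) z :=
      tsum_congr fun n => by rw [hab (n + 1) n.succ_pos, powerSumDiff]
    refine ⟨∏ i, (1 - C (α i) * X), ∏ j, (1 - C (β j) * X),
      fun h => by simpa [eval_prod] using congrArg (eval 0) h, ?_⟩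
    filter_upwards [eventually_exp_logZeta_powerSumDiff_mul α β] with z hz
    simpa [eval_prod, hlog] using hz
end

section
/- Let M be a k×k integer matrix and let φ : ℤ^k → ℤ^k be the endomorphism x ↦ Mx. If det(I − M) ≠ 0, then the Reidemeister number R(φ) is finite and R(φ) = |det(I − M)|. -/
/-! The twisted conjugacy classes of `x ↦ M x` on `ℤᵏ` are the cosets of the image of `1 - M`,
and the image of an injective endomorphism of a lattice has index `|det|`
(`Submodule.natAbs_det_equiv`, proved via the Smith normal form). -/

/-- The set of Reidemeister (twisted conjugacy) classes of the endomorphism `x ↦ M.mulVec x`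
of `ℤᵏ`: `α'` is `φ`-conjugate to `α` iff `α' = γ + α − M.mulVec γ` for some `γ`. -/
def intMatrixReidemeisterSet {k : ℕ} (M : Matrix (Fin k) (Fin k) ℤ) : Type :=
  Quot (fun α α' : Fin k → ℤ => ∃ γ : Fin k → ℤ, α' = γ + α - M.mulVec γ)

open Function

theorem LinearMap.natCard_quotient_range_eq_natAbs_det {M : Type*} [AddCommGroup M]
    [Module.Free ℤ M] [Module.Finite ℤ M] {f : M →ₗ[ℤ] M} (hf : Injective f) :
    Nat.card (M ⧸ range f) = (LinearMap.det f).natAbs := by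
  rw [← Submodule.natAbs_det_equiv (range f) (LinearEquiv.ofInjective f hf)]
  rfl

def LinearMap.twistedConjClassesEquivQuotientRange {R M : Type*} [Ring R] [AddCommGroup M]
    [Module R M] (φ : M →ₗ[R] M) :
    Quot (fun α α' : M => ∃ γ, α' = γ + α - φ γ) ≃ M ⧸ range (id - φ) :=
  Quot.congrRight fun α α' => by
    rw [Submodule.quotientRel_def]
    constructor
    · rintro ⟨γ, rfl⟩
      exact ⟨-γ, by simp only [map_neg, sub_apply, id_apply]; abel⟩
    · rintro ⟨γ, hγ⟩
      refine ⟨-γ, ?_⟩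
      simp only [map_neg, sub_apply, id_apply] at hγ ⊢
      rw [← sub_sub_cancel α α', ← hγ]
      abel

/-- If `φ : ℤᵏ → ℤᵏ` is given by an integer matrix `M` and
`det(I − M) ≠ 0`, then the Reidemeister number of `φ` is finite and equals `|det(I − M)|`. -/
theorem reidemeister_number_of_int_matrix {k : ℕ} (M : Matrix (Fin k) (Fin k) ℤ)
    (h : (1 - M).det ≠ 0) :
    Finite (intMatrixReidemeisterSet M) ∧
      Nat.card (intMatrixReidemeisterSet M) = (1 - M).det.natAbs := by
  have hcard : Nat.card (intMatrixReidemeisterSet M) = (1 - M).det.natAbs :=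
    calc Nat.card (intMatrixReidemeisterSet M)
        = Nat.card ((Fin k → ℤ) ⧸ LinearMap.range (LinearMap.id - Matrix.toLin' M)) :=
          Nat.card_congr (Matrix.toLin' M).twistedConjClassesEquivQuotientRange
      _ = (LinearMap.det (Matrix.toLin' (1 - M))).natAbs := by
          rw [← Matrix.toLin'_one, ← map_sub]
          exact LinearMap.natCard_quotient_range_eq_natAbs_det
            (Matrix.mulVec_injective_of_det_ne_zero h)
      _ = (1 - M).det.natAbs := by rw [LinearMap.det_toLin']
  exact ⟨Nat.finite_of_card_ne_zero (hcard ▸ Int.natAbs_ne_zero.mpr h), hcard⟩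
end

section
/- Let G be a finitely generated abelian group with torsion subgroup T, and let φ : G → G be an endomorphism. Then φ restricts to an endomorphism φ^finite : T → T and induces an endomorphism φ^∞ of the torsion-free quotient G/T. If R(φ) is finite, then R(φ) = R(φ^∞) · R(φ^finite). -/
/-!
In an abelian group `γ * α * (φ γ)⁻¹ = α * (γ / φ γ)`, so the Reidemeister classes of `φ` are the
cosets of the range of `g ↦ g / φ g`, and `R(φ)` is its index. For a `φ`-invariant subgroup `N`
this index splits as the index of the image of that range in `G ⧸ N` times the relative index of
its intersection with `N`. The image is the corresponding range for the induced map `χ` on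
`G ⧸ N`, and the intersection is the one for `φ` restricted to `N` as soon as `g ↦ g / χ g` is
injective. For `N = T`, finiteness of `R(φ)` gives that map on the free abelian group `G ⧸ T` a
range of finite index, and rank counting then forces it to be injective.
-/

/-- The set of Reidemeister (`φ`-twisted conjugacy) classes of an endomorphism `φ` of a
group `G`: `α'` is `φ`-conjugate to `α` iff `α' = γ * α * (φ γ)⁻¹` for some `γ ∈ G`. -/
def ReidemeisterSet {G : Type*} [Group G] (φ : G →* G) : Type _ :=
  Quot (fun a b : G => ∃ γ : G, b = γ * a * (φ γ)⁻¹)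

/-- The restriction `φ^finite` of an endomorphism `φ` of an abelian group to its torsion
subgroup. -/
def torsionRestrict {G : Type*} [CommGroup G] (φ : G →* G) :
    CommGroup.torsion G →* CommGroup.torsion G :=
  (φ.domRestrict (CommGroup.torsion G)).codRestrict (CommGroup.torsion G)
    (fun t => by
      have ht : IsOfFinOrder (t : G) := (CommGroup.mem_torsion (t : G)).mp t.2
      exact (CommGroup.mem_torsion _).mpr (φ.isOfFinOrder ht))

/-- The endomorphism `φ^∞` induced by `φ` on the torsion-free quotient `G ⧸ T`. -/
def torsionFreeQuotientMap {G : Type*} [CommGroup G] (φ : G →* G) :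
    (G ⧸ CommGroup.torsion G) →* (G ⧸ CommGroup.torsion G) :=
  QuotientGroup.map _ _ φ
    (fun g hg => by
      have hfin : IsOfFinOrder g := (CommGroup.mem_torsion g).mp hg
      exact Subgroup.mem_comap.mpr ((CommGroup.mem_torsion _).mpr (φ.isOfFinOrder hfin)))

theorem LinearMap.injective_of_isTorsion_quotient_range {R M : Type*} [CommRing R] [IsDomain R]
    [AddCommGroup M] [Module R M] [Module.Finite R M] [Module.IsTorsionFree R M]
    (f : M →ₗ[R] M) (hf : Module.IsTorsion R (M ⧸ range f)) : Function.Injective f := by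
  have hcoker : Module.finrank R (M ⧸ range f) = 0 :=
    Module.finrank_eq_zero_iff.mpr fun x ↦
      let ⟨a, ha⟩ := @hf x
      ⟨a, nonZeroDivisors.coe_ne_zero a, ha⟩
  have hrange := (range f).finrank_quotient_add_finrank
  rw [hcoker, zero_add] at hrange
  have hdisj := Submodule.disjoint_ker_of_finrank_le (L := ⊤) f
    (by rw [Submodule.map_top, finrank_top, hrange])
  rw [← ker_eq_bot]
  exact disjoint_top.mp hdisj.symm

theorem AddMonoidHom.injective_of_finiteIndex_range {M : Type*} [AddCommGroup M] [AddGroup.FG M]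
    [IsAddTorsionFree M] (f : M →+ M) [f.range.FiniteIndex] : Function.Injective f := by
  refine f.toIntLinearMap.injective_of_isTorsion_quotient_range fun x ↦ ?_
  obtain ⟨m, rfl⟩ := Submodule.Quotient.mk_surjective _ x
  refine ⟨⟨f.range.index, mem_nonZeroDivisors_of_ne_zero
    (by exact_mod_cast AddSubgroup.FiniteIndex.index_ne_zero)⟩, ?_⟩
  rw [Submonoid.smul_def, ← Submodule.Quotient.mk_smul, Submodule.Quotient.mk_eq_zero,
    natCast_zsmul]
  exact f.range.nsmul_index_mem m

theorem MonoidHom.injective_of_finiteIndex_range {Q : Type*} [CommGroup Q] [Group.FG Q]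
    [IsMulTorsionFree Q] (f : Q →* Q) [f.range.FiniteIndex] : Function.Injective f := by
  have : (MonoidHom.toAdditive f).range.FiniteIndex := ⟨by
    change f.range.toAddSubgroup.index ≠ 0
    rw [Subgroup.index_toAddSubgroup]
    exact Subgroup.FiniteIndex.index_ne_zero⟩
  exact (MonoidHom.toAdditive f).injective_of_finiteIndex_range

theorem Subgroup.index_eq_index_map_mk_mul_relIndex {G : Type*} [Group G] (H N : Subgroup G)
    [H.Normal] [N.Normal] : H.index = (H.map (QuotientGroup.mk' N)).index * H.relIndex N := by
  rw [index_map, QuotientGroup.ker_mk', (QuotientGroup.mk' N).range_eq_top_of_surjective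
    (QuotientGroup.mk'_surjective N), index_top, mul_one, ← relIndex_sup_left (H := N), mul_comm,
    relIndex_mul_index le_sup_left]

section TwistedDiff

variable {G H : Type*} [CommGroup G] [CommGroup H]

def twistedDiff (φ : G →* G) : G →* G := MonoidHom.id G / φ

@[simp] theorem twistedDiff_apply (φ : G →* G) (g : G) : twistedDiff φ g = g / φ g := rfl

theorem twistedDiff_comp_of_comp_eq {φ : G →* G} {ψ : H →* H} {f : G →* H}
    (h : ψ.comp f = f.comp φ) : (twistedDiff ψ).comp f = f.comp (twistedDiff φ) := by
  ext g
  simp [← MonoidHom.comp_apply ψ f, h]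

theorem exists_twisted_conj_iff (φ : G →* G) (a b : G) :
    (∃ γ, b = γ * a * (φ γ)⁻¹) ↔ a⁻¹ * b ∈ (twistedDiff φ).range := by
  refine exists_congr fun γ ↦ ?_
  rw [twistedDiff_apply, eq_inv_mul_iff_mul_eq, eq_comm, mul_right_comm, div_eq_mul_inv, mul_comm]

def reidemeisterSetEquiv (φ : G →* G) : ReidemeisterSet φ ≃ G ⧸ (twistedDiff φ).range :=
  Quot.congrRight fun a b ↦ (exists_twisted_conj_iff φ a b).trans QuotientGroup.leftRel_apply.symm

theorem card_reidemeisterSet (φ : G →* G) :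
    Nat.card (ReidemeisterSet φ) = (twistedDiff φ).range.index :=
  Nat.card_congr (reidemeisterSetEquiv φ)

theorem finiteIndex_range_twistedDiff_iff (φ : G →* G) :
    (twistedDiff φ).range.FiniteIndex ↔ Finite (ReidemeisterSet φ) :=
  Subgroup.finiteIndex_iff_finite_quotient.trans (reidemeisterSetEquiv φ).finite_iff.symm

theorem range_twistedDiff_eq_map {φ : G →* G} {ψ : H →* H} {f : G →* H}
    (hf : Function.Surjective f) (h : ψ.comp f = f.comp φ) :
    (twistedDiff ψ).range = (twistedDiff φ).range.map f := by
  rw [← MonoidHom.range_comp, ← twistedDiff_comp_of_comp_eq h, MonoidHom.range_comp,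
    f.range_eq_top_of_surjective hf, ← MonoidHom.range_eq_map]

theorem finiteIndex_range_twistedDiff_of_surjective {φ : G →* G} {ψ : H →* H} {f : G →* H}
    (hf : Function.Surjective f) (h : ψ.comp f = f.comp φ) [(twistedDiff φ).range.FiniteIndex] :
    (twistedDiff ψ).range.FiniteIndex := by
  rw [range_twistedDiff_eq_map hf h, Subgroup.finiteIndex_iff]
  exact ne_zero_of_dvd_ne_zero Subgroup.FiniteIndex.index_ne_zero (Subgroup.index_map_dvd _ hf)

variable {φ : G →* G} {N : Subgroup G} {ψ : N →* N} {χ : G ⧸ N →* G ⧸ N}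

theorem subgroupOf_range_twistedDiff (hψ : φ.comp N.subtype = N.subtype.comp ψ)
    (hχ : χ.comp (QuotientGroup.mk' N) = (QuotientGroup.mk' N).comp φ)
    (hinj : Function.Injective (twistedDiff χ)) :
    (twistedDiff φ).range.subgroupOf N = (twistedDiff ψ).range := by
  have hψ' := DFunLike.congr_fun (twistedDiff_comp_of_comp_eq hψ)
  have hχ' := DFunLike.congr_fun (twistedDiff_comp_of_comp_eq hχ)
  simp only [MonoidHom.comp_apply] at hψ' hχ'
  ext n
  rw [Subgroup.mem_subgroupOf]
  constructor
  · rintro ⟨g, hg⟩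
    have hgN : g ∈ N := by
      rw [← QuotientGroup.eq_one_iff (N := N), ← hinj.eq_iff, map_one, ← QuotientGroup.mk'_apply,
        hχ', hg, QuotientGroup.mk'_apply, QuotientGroup.eq_one_iff]
      exact n.2
    exact ⟨⟨g, hgN⟩, Subtype.ext ((hψ' ⟨g, hgN⟩).symm.trans hg)⟩
  · rintro ⟨m, rfl⟩
    exact ⟨m, hψ' m⟩

theorem card_reidemeisterSet_eq_mul (hψ : φ.comp N.subtype = N.subtype.comp ψ)
    (hχ : χ.comp (QuotientGroup.mk' N) = (QuotientGroup.mk' N).comp φ)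
    (hinj : Function.Injective (twistedDiff χ)) :
    Nat.card (ReidemeisterSet φ) = Nat.card (ReidemeisterSet χ) * Nat.card (ReidemeisterSet ψ) := by
  rw [card_reidemeisterSet, card_reidemeisterSet, card_reidemeisterSet,
    range_twistedDiff_eq_map (QuotientGroup.mk'_surjective N) hχ,
    ← subgroupOf_range_twistedDiff hψ hχ hinj]
  exact Subgroup.index_eq_index_map_mk_mul_relIndex _ _

end TwistedDiff

theorem torsionFreeQuotientMap_comp_mk' {G : Type*} [CommGroup G] (φ : G →* G) :
    (torsionFreeQuotientMap φ).comp (QuotientGroup.mk' _) = (QuotientGroup.mk' _).comp φ :=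
  rfl

/-- Let `G` be a finitely generated abelian group with torsion subgroup `T`
and `φ : G → G` an endomorphism; `φ` restricts to `φ^finite : T → T` and induces
`φ^∞ : G⧸T → G⧸T`. If the Reidemeister number `R(φ)` is finite, then
`R(φ) = R(φ^∞) · R(φ^finite)`. -/
theorem reidemeister_number_product_torsion {G : Type*} [CommGroup G] [Group.FG G]
    (φ : G →* G) (hfin : Finite (ReidemeisterSet φ)) :
    Nat.card (ReidemeisterSet φ) =
      Nat.card (ReidemeisterSet (torsionFreeQuotientMap φ)) *
        Nat.card (ReidemeisterSet (torsionRestrict φ)) := by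
  have hχ := torsionFreeQuotientMap_comp_mk' φ
  have := (finiteIndex_range_twistedDiff_iff φ).mpr hfin
  have := finiteIndex_range_twistedDiff_of_surjective (QuotientGroup.mk'_surjective _) hχ
  exact card_reidemeisterSet_eq_mul rfl hχ (MonoidHom.injective_of_finiteIndex_range _)
end

section
/- Let G be a finite group and φ : G → G an endomorphism. Since φ maps conjugate elements to conjugate elements, it induces a map Φ on the set of conjugacy classes of G. Then R(φ) equals the number of ordinary conjugacy classes ⟨x⟩ in G such that ⟨φ(x)⟩ = ⟨x⟩, i.e. the number of fixed points of Φ. -/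
open MulAction

theorem MulAction.card_sigma_orbit_stabilizer {G X : Type*} [Group G] [MulAction G X] (b : X) :
    Nat.card (Σ x : orbit G b, stabilizer G (x : X)) = Nat.card G :=
  Nat.card_congr <|
    (Equiv.sigmaCongrRight fun x => (stabilizerEquivStabilizerOfOrbitRel x.2).toEquiv).trans <|
      (Equiv.sigmaEquivProd _ _).trans (orbitProdStabilizerEquivGroup G b)

theorem ConjClasses.card_sigma_stabilizer {G : Type*} [Group G] (c : ConjClasses G) :
    Nat.card (Σ g : {g : G // ConjClasses.mk g = c}, stabilizer (ConjAct G) (g : G)) =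
      Nat.card G := by
  obtain ⟨g₀, rfl⟩ := ConjClasses.mk_surjective c
  let e : {g : G // ConjClasses.mk g = ConjClasses.mk g₀} ≃ orbit (ConjAct G) g₀ :=
    Equiv.subtypeEquivRight fun g => by
      rw [ConjClasses.mk_eq_mk_iff_isConj, ConjAct.mem_orbit_conjAct]
  calc _ = Nat.card (Σ x : orbit (ConjAct G) g₀, stabilizer (ConjAct G) (x : G)) :=
        Nat.card_congr (Equiv.sigmaCongrLeft e)
    _ = Nat.card G :=
        (card_sigma_orbit_stabilizer g₀).trans (Nat.card_congr ConjAct.ofConjAct.toEquiv)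

set_option linter.unusedVariables false in
def TwistedConj {G : Type*} [Group G] (φ : G →* G) : Type _ := G

namespace TwistedConj

variable {G : Type*} [Group G] (φ : G →* G)

def of : G ≃ TwistedConj φ := Equiv.refl G

instance [Finite G] : Finite (TwistedConj φ) := inferInstanceAs (Finite G)

instance : MulAction G (TwistedConj φ) where
  smul γ α := of φ (γ * (of φ).symm α * (φ γ)⁻¹)
  one_smul α := by simp [HSMul.hSMul]
  mul_smul γ δ α := by simp [HSMul.hSMul, mul_assoc]

theorem smul_of (γ α : G) : γ • of φ α = of φ (γ * α * (φ γ)⁻¹) := rfl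

theorem orbitRel_of_iff (α β : G) :
    orbitRel G (TwistedConj φ) (of φ α) (of φ β) ↔ ∃ γ, β = γ * α * (φ γ)⁻¹ := by
  rw [Setoid.comm', orbitRel_apply, mem_orbit_iff]
  simp only [smul_of, (of φ).apply_eq_iff_eq, eq_comm]

def reidemeisterSetEquiv : ReidemeisterSet φ ≃ orbitRel.Quotient G (TwistedConj φ) :=
  Quot.congr (of φ) fun α β => (orbitRel_of_iff φ α β).symm

theorem card_reidemeisterSet_mul_card :
    Nat.card (ReidemeisterSet φ) * Nat.card G = Nat.card (Σ γ : G, fixedBy (TwistedConj φ) γ) := by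
  rw [Nat.card_congr (reidemeisterSetEquiv φ), ← Nat.card_prod,
    Nat.card_congr (sigmaFixedByEquivOrbitsProdGroup G _)]

theorem of_mem_fixedBy_iff (γ α : G) :
    of φ α ∈ fixedBy (TwistedConj φ) γ ↔ γ * α = α * φ γ := by
  rw [mem_fixedBy, smul_of, (of φ).apply_eq_iff_eq, mul_inv_eq_iff_eq_mul]

theorem isConj_of_mem_fixedBy {γ : G} {x : TwistedConj φ} (hx : x ∈ fixedBy (TwistedConj φ) γ) :
    IsConj γ (φ γ) := by
  obtain ⟨α, rfl⟩ := (of φ).surjective x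
  rw [of_mem_fixedBy_iff] at hx
  exact isConj_iff.mpr ⟨α⁻¹, by rw [inv_inv, mul_assoc, hx, inv_mul_cancel_left]⟩

def fixedByEquivStabilizer {γ c : G} (hc : c * γ * c⁻¹ = φ γ) :
    fixedBy (TwistedConj φ) γ ≃ stabilizer (ConjAct G) γ :=
  ((of φ).subtypeEquiv (p := fun α => γ * α = α * φ γ) fun α =>
      (of_mem_fixedBy_iff φ γ α).symm).symm.trans <|
    ((Equiv.mulRight c).trans ConjAct.toConjAct.toEquiv).subtypeEquiv fun α => by
      simp only [Equiv.trans_apply, Equiv.coe_mulRight, MulEquiv.toEquiv_eq_coe,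
        MulEquiv.coe_toEquiv, mem_stabilizer_iff, ConjAct.smul_def, ConjAct.ofConjAct_toConjAct]
      rw [← hc, ← mul_assoc α, ← mul_assoc α, eq_mul_inv_iff_mul_eq, mul_inv_eq_iff_eq_mul,
        eq_comm, mul_assoc γ]

theorem card_sigma_fixedBy_fiber_of_map_eq {c : ConjClasses G} (hc : ConjClasses.map φ c = c) :
    Nat.card (Σ γ : {γ : G // ConjClasses.mk γ = c}, fixedBy (TwistedConj φ) (γ : G)) =
      Nat.card G := by
  have hconj (γ : {γ : G // ConjClasses.mk γ = c}) : IsConj (γ : G) (φ γ) := by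
    obtain ⟨γ, rfl⟩ := γ
    exact ConjClasses.mk_eq_mk_iff_isConj.mp hc.symm
  rw [← ConjClasses.card_sigma_stabilizer c]
  exact Nat.card_congr <| Equiv.sigmaCongrRight fun γ =>
    fixedByEquivStabilizer φ (isConj_iff.mp (hconj γ)).choose_spec

theorem card_sigma_fixedBy_fiber_of_map_ne {c : ConjClasses G} (hc : ConjClasses.map φ c ≠ c) :
    Nat.card (Σ γ : {γ : G // ConjClasses.mk γ = c}, fixedBy (TwistedConj φ) (γ : G)) = 0 := by
  refine Nat.card_eq_zero.mpr (.inl ⟨fun ⟨⟨γ, hγ⟩, x⟩ => hc ?_⟩)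
  subst hγ
  exact ConjClasses.mk_eq_mk_iff_isConj.mpr (isConj_of_mem_fixedBy φ x.2).symm

end TwistedConj

/-- For an endomorphism `φ` of a finite group `G`, the Reidemeister number
`R(φ)` equals the number of ordinary conjugacy classes `⟨x⟩` of `G` with `⟨φ(x)⟩ = ⟨x⟩`,
i.e. the number of fixed points of the map induced by `φ` on conjugacy classes. -/
theorem reidemeister_number_eq_card_fixed_conjClasses {G : Type*} [Group G] [Finite G]
    (φ : G →* G) :
    Nat.card (ReidemeisterSet φ) =
      Nat.card {c : ConjClasses G // ConjClasses.map φ c = c} := by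
  classical
  have : Fintype (ConjClasses G) := Fintype.ofFinite _
  refine Nat.eq_of_mul_eq_mul_right (Nat.card_pos (α := G)) ?_
  calc Nat.card (ReidemeisterSet φ) * Nat.card G
      = Nat.card (Σ γ : G, fixedBy (TwistedConj φ) γ) :=
        TwistedConj.card_reidemeisterSet_mul_card φ
    _ = Nat.card (Σ c : ConjClasses G,
          Σ γ : {γ : G // ConjClasses.mk γ = c}, fixedBy (TwistedConj φ) (γ : G)) :=
        Nat.card_congr <|
          (Equiv.sigmaCongrLeft (Equiv.sigmaFiberEquiv ConjClasses.mk)).symm.trans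
            (Equiv.sigmaAssoc fun c (γ : {γ : G // ConjClasses.mk γ = c}) =>
              fixedBy (TwistedConj φ) (γ : G))
    _ = ∑ c : ConjClasses G, if ConjClasses.map φ c = c then Nat.card G else 0 := by
        rw [Nat.card_sigma]
        refine Finset.sum_congr rfl fun c _ => ?_
        split_ifs with hc
        exacts [TwistedConj.card_sigma_fixedBy_fiber_of_map_eq φ hc,
          TwistedConj.card_sigma_fixedBy_fiber_of_map_ne φ hc]
    _ = Nat.card {c : ConjClasses G // ConjClasses.map φ c = c} * Nat.card G := by
        rw [Finset.sum_ite, Finset.sum_const_zero, add_zero, Finset.sum_const, smul_eq_mul,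
          ← Fintype.card_subtype, ← Nat.card_eq_fintype_card]
end

section
/- Let G be a finite group and φ : G → G an endomorphism. Then R(φ) equals the number of equivalence classes of irreducible finite-dimensional complex representations ρ of G such that ρ∘φ is equivalent to ρ (i.e. there is a linear isomorphism of the representation spaces intertwining ρ∘φ and ρ). -/
/-- A finite-dimensional complex representation (on `ℂⁿ`) is irreducible if the space is
nonzero and has no nonzero proper invariant subspace. -/
def IsIrreducibleRep {G : Type*} [Group G] {n : ℕ}
    (ρ : Representation ℂ G (Fin n → ℂ)) : Prop :=
  0 < n ∧ ∀ p : Submodule ℂ (Fin n → ℂ),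
    (∀ g : G, ∀ v ∈ p, ρ g v ∈ p) → p = ⊥ ∨ p = ⊤

/-- The type of irreducible finite-dimensional complex representations `ρ` of `G` such that
`ρ ∘ φ` is equivalent to `ρ`, i.e. some linear isomorphism intertwines `ρ ∘ φ` and `ρ`. -/
def FixedIrredRep (G : Type*) [Group G] (φ : G →* G) : Type _ :=
  Σ n : ℕ, { ρ : Representation ℂ G (Fin n → ℂ) // IsIrreducibleRep ρ ∧
    ∃ M : (Fin n → ℂ) ≃ₗ[ℂ] (Fin n → ℂ),
      ∀ g : G, M.toLinearMap ∘ₗ ρ (φ g) = ρ g ∘ₗ M.toLinearMap }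

/-- Equivalence of representations: a linear isomorphism of the representation spaces
commuting with the actions. -/
def RepEquiv {G : Type*} [Group G] {φ : G →* G} (ρ σ : FixedIrredRep G φ) : Prop :=
  ∃ e : (Fin ρ.1 → ℂ) ≃ₗ[ℂ] (Fin σ.1 → ℂ),
    ∀ g : G, e.toLinearMap ∘ₗ ρ.2.1 g = σ.2.1 g ∘ₗ e.toLinearMap

/-!
Functions on the Reidemeister classes (twisted class functions) form a space of dimension
`R(φ)`. For a twisted class function `f` and an irreducible `ρ`, the Fourier coefficient
`∑ α, f α • ρ α⁻¹` intertwines `ρ` with `ρ ∘ φ`; by Schur's lemma it vanishes unless `ρ ∘ φ ≅ ρ`,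
and if `M : ρ ∘ φ ≅ ρ` it is a multiple of `M⁻¹`, detected by the functional
`f ↦ tr (M ∘ ∑ α, f α • ρ α⁻¹)`. By the Schur orthogonality relations these functionals, one for
each class of `φ`-fixed irreducibles, are biorthogonal to the twisted characters
`α ↦ tr (ρ α ∘ M⁻¹)`, and by Fourier inversion on the regular representation (using Maschke's
theorem) they separate twisted class functions. So the twisted characters form a basis.
-/

open Module LinearMap

theorem Module.natCard_eq_finrank_of_biorthogonal {K E ι : Type*} [Field K] [AddCommGroup E]
    [Module K E] [FiniteDimensional K E] (v : ι → E) (l : ι → Dual K E)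
    (h_diag : ∀ i, l i (v i) ≠ 0) (h_off : ∀ i j, i ≠ j → l i (v j) = 0)
    (h_sep : ∀ x, (∀ i, l i x = 0) → x = 0) : Nat.card ι = finrank K E := by
  classical
  have hv : LinearIndependent K v := by
    rw [linearIndependent_iff']
    intro s c hc i hi
    have := congr(l i $hc)
    rw [map_sum, Finset.sum_eq_single i (fun j _ hj => by simp [h_off i j hj.symm])
      (fun h => absurd hi h)] at this
    simpa [h_diag i] using this
  have := hv.finite
  have := Fintype.ofFinite ι
  refine le_antisymm (Nat.card_eq_fintype_card (α := ι) ▸ hv.fintype_card_le_finrank) ?_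
  have hinj : Function.Injective (LinearMap.pi l) := by
    rw [← ker_eq_bot, eq_bot_iff]
    exact fun x hx => h_sep x fun i => congr_fun hx i
  simpa using LinearMap.finrank_le_finrank_of_injective hinj

namespace ReidemeisterSet

variable {G : Type*} [Group G] (φ : G →* G)

def mk (α : G) : ReidemeisterSet φ := Quot.mk _ α

lemma mk_surjective : Function.Surjective (mk φ) := Quot.exists_rep

lemma mk_mul_mul_inv (γ α : G) : mk φ (γ * α * (φ γ)⁻¹) = mk φ α := (Quot.sound ⟨γ, rfl⟩).symm

instance [Finite G] : Finite (ReidemeisterSet φ) := Finite.of_surjective _ (mk_surjective φ)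

end ReidemeisterSet

namespace Representation

section Irreducible

variable {G k V W : Type*} [Monoid G] [Field k] [AddCommGroup V] [Module k V] [AddCommGroup W]
  [Module k W]

lemma isIrreducible_iff (ρ : Representation k G V) :
    ρ.IsIrreducible ↔
      Nontrivial V ∧ ∀ p : Submodule k V, (∀ g, ∀ v ∈ p, ρ g v ∈ p) → p = ⊥ ∨ p = ⊤ := by
  refine ⟨fun h => ⟨?_, fun p hp => ?_⟩, fun ⟨_, h⟩ => ?_⟩
  · by_contra hV
    rw [not_nontrivial_iff_subsingleton] at hV
    exact bot_ne_top (α := Subrepresentation ρ)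
      (Subrepresentation.toSubmodule_injective (Subsingleton.elim _ _))
  · rcases h.eq_bot_or_eq_top ⟨p, hp⟩ with hp | hp
    exacts [.inl congr(($hp).toSubmodule), .inr congr(($hp).toSubmodule)]
  · refine { exists_pair_ne := ⟨⊥, ⊤, fun h => bot_ne_top congr(($h).toSubmodule)⟩
             eq_bot_or_eq_top := fun p => ?_ }
    rcases h p.toSubmodule p.apply_mem_toSubmodule with hp | hp
    exacts [.inl (Subrepresentation.toSubmodule_injective hp),
      .inr (Subrepresentation.toSubmodule_injective hp)]

lemma IsIrreducible.of_equiv {ρ : Representation k G V} {σ : Representation k G W}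
    (e : ρ.Equiv σ) [ρ.IsIrreducible] : σ.IsIrreducible := by
  rw [irreducible_iff_isSimpleModule_asModule] at *
  exact IsSimpleModule.congr <| .ofLinearMap
    (IntertwiningMap.equivLinearMapAsModule σ ρ e.symm.toIntertwiningMap)
    (IntertwiningMap.equivLinearMapAsModule ρ σ e.toIntertwiningMap)
    (by ext x; exact e.symm_apply_apply x) (by ext x; exact e.apply_symm_apply x)

lemma IsIrreducible.finrank_pos [FiniteDimensional k V] (ρ : Representation k G V)
    [ρ.IsIrreducible] : 0 < finrank k V :=
  have := ((isIrreducible_iff ρ).1 ‹_›).1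
  Module.finrank_pos

lemma exists_equiv_fin_finrank [FiniteDimensional k V] (ρ : Representation k G V) :
    ∃ σ : Representation k G (Fin (finrank k V) → k), Nonempty (ρ.Equiv σ) := by
  let e := (Module.finBasis k V).equivFun
  exact ⟨e.conjRingEquiv.toMonoidHom.comp ρ, ⟨.mk e fun g => by ext; simp⟩⟩

end Irreducible

variable {G k V W : Type*} [Group G] [Field k] [AddCommGroup V] [Module k V] [AddCommGroup W]
  [Module k W]

lemma IsIrreducible.eq_trace_div_finrank_smul_one [IsAlgClosed k] [CharZero k]
    [FiniteDimensional k V] {ρ : Representation k G V} [ρ.IsIrreducible] (T : IntertwiningMap ρ ρ) :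
    T.toLinearMap = (trace k V T.toLinearMap / finrank k V) • 1 := by
  obtain ⟨c, rfl⟩ := algebraMap_intertwiningMap_bijective_of_isAlgClosed.2 T
  have : (finrank k V : k) ≠ 0 := by exact_mod_cast (IsIrreducible.finrank_pos ρ).ne'
  have h1 : (1 : IntertwiningMap ρ ρ).toLinearMap = 1 := rfl
  simp [h1, mul_div_cancel_right₀ _ this]

variable [Fintype G]

noncomputable def conjAverage (σ : Representation k G W) (ρ : Representation k G V)
    (B : W →ₗ[k] V) : IntertwiningMap σ ρ where
  toLinearMap := ∑ α, ρ α⁻¹ ∘ₗ B ∘ₗ σ α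
  isIntertwining' g := by
    ext w
    simp only [comp_apply, coe_sum, Finset.sum_apply, map_sum]
    refine Fintype.sum_equiv (_root_.Equiv.mulRight g) _ _ fun α => ?_
    simp [← Module.End.mul_apply, ← map_mul]

lemma conjAverage_self_apply [IsAlgClosed k] [CharZero k] [FiniteDimensional k V]
    (ρ : Representation k G V) [ρ.IsIrreducible] (B : Module.End k V) (v : V) :
    conjAverage ρ ρ B v = (Fintype.card G * trace k V B / finrank k V) • v := by
  have htrace : trace k V (conjAverage ρ ρ B).toLinearMap = Fintype.card G * trace k V B := by
    simp [conjAverage, map_sum, ← Module.End.mul_eq_comp, trace_mul_comm k (ρ _), mul_assoc,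
      ← map_mul]
  rw [← IntertwiningMap.toLinearMap_apply, IsIrreducible.eq_trace_div_finrank_smul_one, htrace,
    LinearMap.smul_apply, Module.End.one_apply]

noncomputable def fourier (ρ : Representation k G V) : (G → k) →ₗ[k] Module.End k V :=
  Fintype.linearCombination k fun α => ρ α⁻¹

lemma fourier_apply (ρ : Representation k G V) (f : G → k) :
    fourier ρ f = ∑ α, f α • ρ α⁻¹ :=
  Fintype.linearCombination_apply ..

lemma Equiv.conj_fourier {ρ : Representation k G V} {σ : Representation k G W} (e : ρ.Equiv σ)
    (f : G → k) : e.toLinearEquiv.conj (fourier ρ f) = fourier σ f := by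
  simp [fourier_apply, map_sum, e.conj_apply_self]

lemma Equiv.fourier_eq_zero_iff {ρ : Representation k G V} {σ : Representation k G W}
    (e : ρ.Equiv σ) (f : G → k) : fourier ρ f = 0 ↔ fourier σ f = 0 := by
  rw [← e.conj_fourier, LinearEquiv.map_eq_zero_iff]

lemma fourier_subrepresentation_apply {ρ : Representation k G V} (p : Subrepresentation ρ)
    (f : G → k) (x : p.toSubmodule) : (fourier p.toRepresentation f x : V) = fourier ρ f x := by
  simp [fourier_apply, Subrepresentation.toRepresentation]

lemma fourier_matrixCoeff_apply (σ : Representation k G W) (ρ : Representation k G V) (ℓ : Dual k W)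
    (w : W) (v : V) :
    fourier ρ (fun α => ℓ (σ α w)) v = conjAverage σ ρ (ℓ.smulRight v) w := by
  simp [fourier_apply, conjAverage]

lemma fourier_trace_comp_apply {ι : Type*} [Fintype ι] (b : Basis ι k W)
    (σ : Representation k G W) (ρ : Representation k G V) (C : Module.End k W) (v : V) :
    fourier ρ (fun α => trace k W (σ α ∘ₗ C)) v =
      ∑ i, conjAverage σ ρ ((b.coord i).smulRight v) (C (b i)) := by
  classical
  simp_rw [trace_eq_matrix_trace k b, Matrix.trace, Matrix.diag, toMatrix_apply, comp_apply,
    ← b.coord_apply]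
  rw [← Finset.sum_fn, map_sum, coe_sum, Finset.sum_apply]
  simp only [fourier_matrixCoeff_apply]

theorem fourier_trace_comp_eq_zero [FiniteDimensional k W] (σ : Representation k G W)
    (ρ : Representation k G V) [σ.IsIrreducible] [ρ.IsIrreducible] [IsEmpty (σ.Equiv ρ)]
    (C : Module.End k W) : fourier ρ (fun α => trace k W (σ α ∘ₗ C)) = 0 := by
  ext1 v
  simp [fourier_trace_comp_apply (Module.finBasis k W), Subsingleton.elim (conjAverage σ ρ _) 0]

theorem fourier_trace_comp_self [IsAlgClosed k] [CharZero k] [FiniteDimensional k V]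
    (ρ : Representation k G V) [ρ.IsIrreducible] (C : Module.End k V) :
    fourier ρ (fun α => trace k V (ρ α ∘ₗ C)) = (Fintype.card G / finrank k V : k) • C := by
  ext1 v
  set b := Module.finBasis k V
  calc fourier ρ (fun α => trace k V (ρ α ∘ₗ C)) v
      = ∑ i, (Fintype.card G / finrank k V * b.repr v i : k) • C (b i) := by
        simp [fourier_trace_comp_apply b, conjAverage_self_apply, mul_div_right_comm]
    _ = (Fintype.card G / finrank k V : k) • C (∑ i, b.repr v i • b i) := by
        simp only [map_sum, map_smul, Finset.smul_sum, smul_smul]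
    _ = ((Fintype.card G / finrank k V : k) • C) v := by rw [b.sum_repr]; rfl

theorem fourier_eq_zero_of_forall_isIrreducible [CharZero k] {f : G → k}
    (hf : ∀ (n : ℕ) (σ : Representation k G (Fin n → k)), σ.IsIrreducible → fourier σ f = 0)
    [FiniteDimensional k V] (ρ : Representation k G V) : fourier ρ f = 0 := by
  induction h : finrank k V using Nat.strong_induction_on generalizing V with
  | _ n ih =>
  rcases subsingleton_or_nontrivial V with hV | hV
  · exact Subsingleton.elim _ _
  by_cases hirr : ∀ p : Subrepresentation ρ, p = ⊥ ∨ p = ⊤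
  · have : ρ.IsIrreducible :=
      { exists_pair_ne := ⟨⊥, ⊤, fun h => bot_ne_top congr(($h).toSubmodule)⟩
        eq_bot_or_eq_top := hirr }
    obtain ⟨σ, ⟨e⟩⟩ := exists_equiv_fin_finrank ρ
    exact (e.fourier_eq_zero_iff f).2 (hf _ σ (IsIrreducible.of_equiv e))
  push Not at hirr
  obtain ⟨p, hp_bot, hp_top⟩ := hirr
  -- the complement exists by Maschke's theorem
  obtain ⟨q, hpq⟩ := exists_isCompl p
  have hq_top : q ≠ ⊤ := by
    rintro rfl
    exact hp_bot (disjoint_top.1 hpq.disjoint)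
  have vanish : ∀ r : Subrepresentation ρ, r ≠ ⊤ → ∀ v ∈ r.toSubmodule, fourier ρ f v = 0 := by
    intro r hr v hv
    have hr' : r.toSubmodule ≠ ⊤ := fun h => hr (Subrepresentation.toSubmodule_injective h)
    rw [← fourier_subrepresentation_apply r f ⟨v, hv⟩,
      ih _ (h ▸ Submodule.finrank_lt hr') r.toRepresentation rfl]
    rfl
  ext1 v
  have hv : v ∈ p.toSubmodule ⊔ q.toSubmodule := by
    rw [← Subrepresentation.toSubmodule_sup, hpq.sup_eq_top]
    trivial
  obtain ⟨a, ha, b, hb, rfl⟩ := Submodule.mem_sup.1 hv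
  simp [vanish p hp_top a ha, vanish q hq_top b hb]

theorem eq_zero_of_forall_fourier_eq_zero [CharZero k] {f : G → k}
    (hf : ∀ (n : ℕ) (σ : Representation k G (Fin n → k)), σ.IsIrreducible → fourier σ f = 0) :
    f = 0 := by
  classical
  ext β
  have := congr(MonoidAlgebra.coeff ($(fourier_eq_zero_of_forall_isIrreducible hf (leftRegular k G))
    (MonoidAlgebra.single 1 1)) β⁻¹)
  simpa [fourier_apply, Finsupp.single_apply] using this

section Twisted

variable {φ : G →* G}

noncomputable def twistedFourier (ρ : Representation k G V) (f : ReidemeisterSet φ → k) :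
    IntertwiningMap ρ (ρ.comp φ) where
  toLinearMap := fourier ρ (f ∘ ReidemeisterSet.mk φ)
  isIntertwining' g := by
    ext v
    simp only [fourier_apply, comp_apply, coe_sum, Finset.sum_apply, map_sum,
      LinearMap.smul_apply]
    refine (Fintype.sum_bijective (fun β => g * β * (φ g)⁻¹)
      ((_root_.Equiv.mulLeft g).trans (_root_.Equiv.mulRight _)).bijective _ _ fun β => ?_).symm
    rw [Function.comp_apply, Function.comp_apply, ReidemeisterSet.mk_mul_mul_inv]
    simp [← Module.End.mul_apply, ← map_mul, mul_assoc]

lemma twistedFourier_eq_zero [FiniteDimensional k V] (ρ : Representation k G V)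
    [ρ.IsIrreducible] [IsEmpty (Equiv (ρ.comp φ) ρ)] (f : ReidemeisterSet φ → k) :
    twistedFourier ρ f = 0 :=
  (IsIrreducible.injective_or_eq_zero _).resolve_left fun hinj => IsEmpty.false <|
    (Equiv.mk (LinearEquiv.ofInjectiveEndo _ hinj) (twistedFourier ρ f).isIntertwining').symm

noncomputable def twistedCoeff {ρ : Representation k G V} (M : Equiv (ρ.comp φ) ρ) :
    Dual k (ReidemeisterSet φ → k) :=
  trace k V ∘ₗ mulLeft k M.toLinearMap ∘ₗ fourier ρ ∘ₗ funLeft k k (ReidemeisterSet.mk φ)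

lemma twistedCoeff_apply {ρ : Representation k G V} (M : Equiv (ρ.comp φ) ρ)
    (f : ReidemeisterSet φ → k) :
    twistedCoeff M f = trace k V (M.toLinearMap ∘ₗ (twistedFourier ρ f).toLinearMap) :=
  rfl

lemma twistedFourier_eq_zero_of_twistedCoeff_eq_zero [IsAlgClosed k] [CharZero k]
    [FiniteDimensional k V] {ρ : Representation k G V} [ρ.IsIrreducible] (M : Equiv (ρ.comp φ) ρ)
    {f : ReidemeisterSet φ → k} (hf : twistedCoeff M f = 0) : twistedFourier ρ f = 0 := by
  have h := IsIrreducible.eq_trace_div_finrank_smul_one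
    (M.toIntertwiningMap.comp (twistedFourier ρ f))
  rw [IntertwiningMap.comp_toLinearMap, ← twistedCoeff_apply, hf, zero_div, zero_smul] at h
  ext v
  exact M.toLinearEquiv.injective (by simpa using congr($h v))

noncomputable def twistedCharacter {ρ : Representation k G V} (M : Equiv (ρ.comp φ) ρ) :
    ReidemeisterSet φ → k :=
  Quot.lift (fun α => trace k V (ρ α ∘ₗ M.symm.toLinearMap)) <| by
    rintro α _ ⟨γ, rfl⟩
    have hM : ρ (φ γ)⁻¹ ∘ₗ M.symm.toLinearMap = M.symm.toLinearMap ∘ₗ ρ γ⁻¹ := by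
      simpa using (M.symm.isIntertwining' γ⁻¹).symm
    simp only [map_mul, ← Module.End.mul_eq_comp] at hM ⊢
    rw [mul_assoc, hM, mul_assoc, trace_mul_comm k (ρ γ), mul_assoc, mul_assoc, ← map_mul,
      inv_mul_cancel, map_one, mul_one]

lemma twistedFourier_twistedCharacter (ρ : Representation k G V) {σ : Representation k G W}
    (M : Equiv (σ.comp φ) σ) :
    (twistedFourier ρ (twistedCharacter M)).toLinearMap =
      fourier ρ (fun α => trace k W (σ α ∘ₗ M.symm.toLinearMap)) :=
  rfl

theorem twistedCoeff_twistedCharacter [IsAlgClosed k] [CharZero k] [FiniteDimensional k V]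
    {ρ : Representation k G V} [ρ.IsIrreducible] (M : Equiv (ρ.comp φ) ρ) :
    twistedCoeff M (twistedCharacter M) = Fintype.card G := by
  have : (finrank k V : k) ≠ 0 := by exact_mod_cast (IsIrreducible.finrank_pos ρ).ne'
  have hM : M.toLinearMap ∘ₗ M.symm.toLinearMap = LinearMap.id := by ext; simp
  rw [twistedCoeff_apply, twistedFourier_twistedCharacter, fourier_trace_comp_self, comp_smul, hM,
    map_smul, trace_id, smul_eq_mul, div_mul_cancel₀ _ this]

theorem twistedCoeff_twistedCharacter_eq_zero [FiniteDimensional k W] {ρ : Representation k G V}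
    {σ : Representation k G W} [ρ.IsIrreducible] [σ.IsIrreducible] [IsEmpty (σ.Equiv ρ)]
    (M : Equiv (ρ.comp φ) ρ) (N : Equiv (σ.comp φ) σ) :
    twistedCoeff M (twistedCharacter N) = 0 := by
  rw [twistedCoeff_apply, twistedFourier_twistedCharacter, fourier_trace_comp_eq_zero, comp_zero,
    map_zero]

end Twisted

end Representation

open Representation

lemma isIrreducibleRep_iff_isIrreducible {G : Type*} [Group G] {n : ℕ}
    (ρ : Representation ℂ G (Fin n → ℂ)) : IsIrreducibleRep ρ ↔ ρ.IsIrreducible := by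
  rw [IsIrreducibleRep, isIrreducible_iff, ← finrank_pos_iff (R := ℂ), finrank_fin_fun]

section FixedIrredRep

variable {G : Type*} [Group G] {φ : G →* G}

noncomputable def FixedIrredRep.equivComp (r : FixedIrredRep G φ) :
    Representation.Equiv (r.2.1.comp φ) r.2.1 :=
  .mk r.2.2.2.choose r.2.2.2.choose_spec

instance (r : FixedIrredRep G φ) : r.2.1.IsIrreducible :=
  (isIrreducibleRep_iff_isIrreducible _).1 r.2.2.1

lemma repEquiv_iff {r s : FixedIrredRep G φ} : RepEquiv r s ↔ Nonempty (r.2.1.Equiv s.2.1) :=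
  ⟨fun ⟨e, he⟩ => ⟨.mk e he⟩, fun ⟨e⟩ => ⟨e.toLinearEquiv, e.isIntertwining'⟩⟩

lemma repEquiv_equivalence : Equivalence (@RepEquiv G _ φ) where
  refl _ := repEquiv_iff.2 ⟨.refl _⟩
  symm h := repEquiv_iff.2 ⟨(repEquiv_iff.1 h).some.symm⟩
  trans h h' := repEquiv_iff.2 ⟨(repEquiv_iff.1 h).some.trans (repEquiv_iff.1 h').some⟩

lemma isEmpty_equiv_out_of_ne {q q' : Quot (@RepEquiv G _ φ)} (h : q ≠ q') :
    IsEmpty (q.out.2.1.Equiv q'.out.2.1) :=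
  ⟨fun e => h (by rw [← q.out_eq, ← q'.out_eq]; exact Quot.sound (repEquiv_iff.2 ⟨e⟩))⟩

lemma nonempty_equiv_out_mk (r : FixedIrredRep G φ) :
    Nonempty ((Quot.mk RepEquiv r).out.2.1.Equiv r.2.1) :=
  repEquiv_iff.1 ((repEquiv_equivalence.quot_mk_eq_iff _ _).1 (Quot.out_eq _))

theorem eq_zero_of_forall_twistedCoeff_eq_zero [Fintype G] {f : ReidemeisterSet φ → ℂ}
    (hf : ∀ q : Quot (@RepEquiv G _ φ), twistedCoeff q.out.equivComp f = 0) : f = 0 := by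
  suffices f ∘ ReidemeisterSet.mk φ = 0 from funext fun x => by
    obtain ⟨α, rfl⟩ := ReidemeisterSet.mk_surjective φ x
    exact congr_fun this α
  refine eq_zero_of_forall_fourier_eq_zero fun n ρ hρ => ?_
  change (twistedFourier ρ f).toLinearMap = 0
  rcases isEmpty_or_nonempty (Equiv (ρ.comp φ) ρ) with hfix | ⟨⟨M⟩⟩
  · rw [twistedFourier_eq_zero]
    rfl
  · let r : FixedIrredRep G φ :=
      ⟨n, ρ, (isIrreducibleRep_iff_isIrreducible ρ).2 hρ, M.toLinearEquiv, M.isIntertwining'⟩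
    obtain ⟨e⟩ := nonempty_equiv_out_mk r
    exact (e.fourier_eq_zero_iff _).1
      congr(IntertwiningMap.toLinearMap
        $(twistedFourier_eq_zero_of_twistedCoeff_eq_zero _ (hf (Quot.mk _ r))))

end FixedIrredRep

/-- For an endomorphism `φ` of a finite group `G`, the Reidemeister number
`R(φ)` equals the number of equivalence classes of irreducible finite-dimensional complex
representations `ρ` of `G` with `ρ ∘ φ` equivalent to `ρ`. -/
theorem reidemeister_number_eq_card_fixed_irreps {G : Type*} [Group G] [Finite G]
    (φ : G →* G) :
    Nat.card (ReidemeisterSet φ) = Nat.card (Quot (@RepEquiv G _ φ)) := by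
  have := Fintype.ofFinite G
  have := Fintype.ofFinite (ReidemeisterSet φ)
  rw [Nat.card_eq_fintype_card, ← Module.finrank_fintype_fun_eq_card ℂ]
  refine (Module.natCard_eq_finrank_of_biorthogonal
    (fun q : Quot (@RepEquiv G _ φ) => twistedCharacter q.out.equivComp)
    (fun q => twistedCoeff q.out.equivComp) (fun q => ?_) (fun q q' hne => ?_)
    fun f => eq_zero_of_forall_twistedCoeff_eq_zero).symm
  · rw [twistedCoeff_twistedCharacter]
    exact_mod_cast Fintype.card_ne_zero
  · have := isEmpty_equiv_out_of_ne hne.symm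
    exact twistedCoeff_twistedCharacter_eq_zero _ _
end

section
/- Let G be a finitely generated abelian group and φ : G → G an endomorphism such that R(φ) is finite. Then R(φ) equals the number of fixed points of the dual map φ̂ on the Pontryagin dual of G, i.e. R(φ) = #{χ ∈ Ĝ : χ∘φ = χ}. -/
lemma card_monoidHom_circle (Q : Type*) [CommGroup Q] [Finite Q] :
    Nat.card (Q →* Circle) = Nat.card Q := by
  obtain ⟨e⟩ := CommGroup.monoidHom_mulEquiv_of_hasEnoughRootsOfUnity Q Circle
  exact (Nat.card_congr (MulEquiv.monoidHomCongrRightEquiv toUnits)).trans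
    (Nat.card_congr e.toEquiv)

namespace MonoidHom

variable {G A : Type*} [CommGroup G] [Group A]

lemma id_div_apply_eq_inv_mul_iff (φ : G →* G) (a b γ : G) :
    (MonoidHom.id G / φ) γ = a⁻¹ * b ↔ b = γ * a * (φ γ)⁻¹ := by
  rw [eq_inv_mul_iff_mul_eq, div_apply, id_apply, div_eq_mul_inv, ← mul_assoc, mul_comm a γ,
    eq_comm]

lemma range_id_div_le_ker_iff (φ : G →* G) (χ : G →* A) :
    (MonoidHom.id G / φ).range ≤ χ.ker ↔ χ.comp φ = χ := by
  simp only [range_le_ker_iff, MonoidHom.ext_iff, comp_apply, div_apply, id_apply, one_apply,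
    map_div, div_eq_one]
  exact forall_congr' fun _ => eq_comm

noncomputable def compEqSelfEquivQuotientRange (φ : G →* G) :
    {χ : G →* A // χ.comp φ = χ} ≃ (G ⧸ (MonoidHom.id G / φ).range →* A) :=
  (Equiv.subtypeEquivRight fun χ => by
      rw [QuotientGroup.ker_mk', range_id_div_le_ker_iff]).trans
    ((QuotientGroup.mk' _).liftOfSurjective (QuotientGroup.mk'_surjective _))

end MonoidHom

def ReidemeisterSet.equivQuotientRange {G : Type*} [CommGroup G] (φ : G →* G) :
    ReidemeisterSet φ ≃ G ⧸ (MonoidHom.id G / φ).range :=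
  Quot.congrRight fun a b => by
    rw [QuotientGroup.leftRel_apply]
    exact exists_congr fun γ => (MonoidHom.id_div_apply_eq_inv_mul_iff φ a b γ).symm

theorem reidemeister_number_eq_card_fixed_characters_general {G : Type*} [CommGroup G]
    (φ : G →* G) (hfin : Finite (ReidemeisterSet φ)) :
    Nat.card (ReidemeisterSet φ) =
      Nat.card {χ : G →* Circle // χ.comp φ = χ} := by
  have : Finite (G ⧸ (MonoidHom.id G / φ).range) :=
    Finite.of_equiv _ (ReidemeisterSet.equivQuotientRange φ)
  rw [Nat.card_congr (ReidemeisterSet.equivQuotientRange φ),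
    Nat.card_congr (MonoidHom.compEqSelfEquivQuotientRange φ), card_monoidHom_circle]

/-- Let `G` be a finitely generated abelian group and `φ : G → G` an
endomorphism with finite Reidemeister number. Then `R(φ)` equals the number of fixed points
of the dual map `φ̂ : χ ↦ χ ∘ φ` on the Pontryagin dual `Ĝ = G →* Circle`. -/
theorem reidemeister_number_eq_card_fixed_characters {G : Type*} [CommGroup G] [Group.FG G]
    (φ : G →* G) (hfin : Finite (ReidemeisterSet φ)) :
    Nat.card (ReidemeisterSet φ) =
      Nat.card {χ : G →* Circle // χ.comp φ = χ} :=
  reidemeister_number_eq_card_fixed_characters_general φ hfin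
end

section
/- Let φ : G → G be an endomorphism of a group G, and let H be a subgroup of G such that φ(H) ⊆ H and for every x ∈ G there exists n ∈ ℕ with φ^n(x) ∈ H. Then the map sending the φ|_H-conjugacy class of x ∈ H to the φ-conjugacy class of x in G is a bijection between the set of φ|_H-conjugacy classes of H and the set of φ-conjugacy classes of G; in particular R(φ) = R(φ|_H), where φ|_H : H → H is the restriction of φ. -/
/-!
Every `φ`-conjugacy class meets `H`, because `x` is `φ`-conjugate to `φ x` (via `x⁻¹`), hence to
`φⁿ x`. For injectivity, let `a, b ∈ H` with `b = γ a φ(γ)⁻¹` for some `γ ∈ G`, and pick `n` with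
`φⁿ γ ∈ H`. Applying `φⁿ` gives `φⁿ b = φⁿ γ · φⁿ a · φ(φⁿ γ)⁻¹`, so `φⁿ a` and `φⁿ b` are
`φ|_H`-conjugate; since `a ~ φⁿ a` and `b ~ φⁿ b` already hold inside `H`, so are `a` and `b`.
-/

open Function

theorem Quot.map_bijective {α β : Type*} {r : α → α → Prop} {s : β → β → Prop}
    (hs : Equivalence s) (f : α → β) (hf : ∀ a b, r a b ↔ s (f a) (f b))
    (hsurj : ∀ y, ∃ x, s (f x) y) :
    Bijective (Quot.map f fun a b => (hf a b).1) := by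
  constructor
  · rintro ⟨a⟩ ⟨b⟩ hab
    exact Quot.sound <| (hf a b).2 <| hs.eqvGen_iff.1 <| Quot.eqvGen_exact hab
  · rintro ⟨y⟩
    obtain ⟨x, hx⟩ := hsurj y
    exact ⟨Quot.mk r x, Quot.sound hx⟩

namespace Monoid.End

variable {G : Type*} [Group G] (φ : Monoid.End G)

def TwistedConj (a b : G) : Prop := ∃ γ : G, b = γ * a * (φ γ)⁻¹

theorem twistedConj_equivalence : Equivalence φ.TwistedConj where
  refl _ := ⟨1, by simp⟩
  symm := by
    rintro _ _ ⟨γ, rfl⟩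
    exact ⟨γ⁻¹, by simp [mul_assoc]⟩
  trans := by
    rintro _ _ _ ⟨γ, rfl⟩ ⟨δ, rfl⟩
    exact ⟨δ * γ, by simp [mul_assoc]⟩

theorem twistedConj_apply_self (x : G) : φ.TwistedConj x (φ x) :=
  ⟨x⁻¹, by simp⟩

theorem twistedConj_pow_apply_self (n : ℕ) (x : G) : φ.TwistedConj x ((φ ^ n) x) := by
  induction n with
  | zero => exact φ.twistedConj_equivalence.refl x
  | succ n ih =>
    rw [coe_pow, iterate_succ_apply']
    exact φ.twistedConj_equivalence.trans ih (φ.twistedConj_apply_self _)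

theorem pow_apply_mul_mul_apply_inv (n : ℕ) (γ a : G) :
    (φ ^ n) (γ * a * (φ γ)⁻¹) = (φ ^ n) γ * (φ ^ n) a * (φ ((φ ^ n) γ))⁻¹ := by
  rw [map_mul, map_mul, map_inv, coe_pow, ← iterate_succ_apply, iterate_succ_apply']

variable (H : Subgroup G) (hH : ∀ h ∈ H, φ h ∈ H)

def restrict : Monoid.End H :=
  (MonoidHom.domRestrict φ H).codRestrict H fun h => hH h h.2

@[simp]
theorem coe_restrict_apply (a : H) : (φ.restrict H hH a : G) = φ a :=
  rfl

@[simp]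
theorem coe_restrict_pow_apply (n : ℕ) (a : H) : ((φ.restrict H hH ^ n) a : G) = (φ ^ n) a := by
  induction n with
  | zero => rfl
  | succ n ih =>
    rw [coe_pow, iterate_succ_apply', ← coe_pow, coe_pow (M := G), iterate_succ_apply', ← coe_pow,
      ← ih]
    rfl

theorem twistedConj_restrict_iff (a b : H) :
    (φ.restrict H hH).TwistedConj a b ↔ ∃ γ : H, (b : G) = γ * a * (φ γ)⁻¹ :=
  exists_congr fun _ => by rw [Subtype.ext_iff]; rfl

theorem twistedConj_restrict_iff_twistedConj (hev : ∀ x : G, ∃ n : ℕ, (φ ^ n) x ∈ H) (a b : H) :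
    (φ.restrict H hH).TwistedConj a b ↔ φ.TwistedConj a b := by
  refine ⟨fun ⟨γ, hγ⟩ => ⟨γ, congrArg Subtype.val hγ⟩, ?_⟩
  rintro ⟨γ, hγ⟩
  obtain ⟨n, hn⟩ := hev γ
  set ψ := φ.restrict H hH
  have hψ := ψ.twistedConj_equivalence
  have h_pow : ψ.TwistedConj ((ψ ^ n) a) ((ψ ^ n) b) :=
    ⟨⟨_, hn⟩, Subtype.ext <| by
      simp only [ψ, Subgroup.coe_mul, Subgroup.coe_inv, coe_restrict_apply, coe_restrict_pow_apply,
        hγ, pow_apply_mul_mul_apply_inv]⟩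
  exact hψ.trans (hψ.trans (ψ.twistedConj_pow_apply_self n a) h_pow)
    (hψ.symm (ψ.twistedConj_pow_apply_self n b))

end Monoid.End

/-- Let `φ : G → G` be an endomorphism and `H ≤ G` a subgroup with
`φ(H) ⊆ H` such that every `x ∈ G` has `φⁿ(x) ∈ H` for some `n`. Then the map sending the
`φ|_H`-conjugacy class of `x ∈ H` to the `φ`-conjugacy class of `x` in `G` is a bijection;
in particular `R(φ) = R(φ|_H)`. -/
theorem reidemeister_classes_restrict_bijective {G : Type*} [Group G] (φ : Monoid.End G)
    (H : Subgroup G) (hH : ∀ h ∈ H, φ h ∈ H)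
    (hev : ∀ x : G, ∃ n : ℕ, (φ ^ n) x ∈ H) :
    ∃ F : Quot (fun a b : H => ∃ γ : H, (b : G) = (γ : G) * (a : G) * (φ (γ : G))⁻¹) →
        Quot (fun a b : G => ∃ γ : G, b = γ * a * (φ γ)⁻¹),
      (∀ a : H, F (Quot.mk _ a) = Quot.mk _ (a : G)) ∧
      Function.Bijective F ∧
      Nat.card (Quot (fun a b : G => ∃ γ : G, b = γ * a * (φ γ)⁻¹)) =
        Nat.card
          (Quot (fun a b : H => ∃ γ : H, (b : G) = (γ : G) * (a : G) * (φ (γ : G))⁻¹)) := by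
  have h_iff (a b : H) : (∃ γ : H, (b : G) = γ * a * (φ γ)⁻¹) ↔ φ.TwistedConj a b :=
    (φ.twistedConj_restrict_iff H hH a b).symm.trans
      (φ.twistedConj_restrict_iff_twistedConj H hH hev a b)
  have h_surj (x : G) : ∃ a : H, φ.TwistedConj a x := by
    obtain ⟨n, hn⟩ := hev x
    exact ⟨⟨_, hn⟩, φ.twistedConj_equivalence.symm (φ.twistedConj_pow_apply_self n x)⟩
  have h_bij := Quot.map_bijective φ.twistedConj_equivalence Subtype.val h_iff h_surj
  exact ⟨_, fun _ => rfl, h_bij, (Nat.card_eq_of_bijective _ h_bij).symm⟩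
end

section
/- For every integer k with |k| ≠ 1, every positive integer m, and every natural number n: Σ_{d∣n} μ(d)·gcd(1 − k^{n/d}, m) ≡ 0 mod n, where gcd(1 − k^j, m) denotes the greatest common divisor of 1 − k^j and m (taken as a nonnegative integer). -/
/-!
The number `gcd (1 - k ^ j, m)` counts the points of `ZMod m` fixed by `x ↦ k ^ j * x`, that is,
the points of period dividing `j` of `T x = k * x`. Möbius inversion therefore turns the sum into
the number of points of minimal period exactly `n`, and these fall into `T`-orbits of size `n`.
-/

open Function Finset

namespace Function

variable {α : Type*} [Fintype α] [DecidableEq α] (f : α → α)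

theorem card_isPeriodicPt_eq_sum_card_minimalPeriod_eq {j : ℕ} (hj : 0 < j) :
    #{x | IsPeriodicPt f j x} = ∑ d ∈ j.divisors, #{x | minimalPeriod f x = d} := by
  rw [card_eq_sum_card_fiberwise fun x hx =>
    Nat.mem_divisors.2 ⟨(mem_filter.1 hx).2.minimalPeriod_dvd, hj.ne'⟩]
  refine sum_congr rfl fun d hd => congrArg card ?_
  rw [filter_filter]
  refine filter_congr fun x _ => and_iff_right_of_imp fun hx => ?_
  exact isPeriodicPt_iff_minimalPeriod_dvd.2 (hx ▸ Nat.dvd_of_mem_divisors hd)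

theorem filter_periodicOrbit_eq_image_iterate {n : ℕ} (hn : 0 < n) {x : α}
    (hx : minimalPeriod f x = n) :
    ({y | minimalPeriod f y = n ∧ periodicOrbit f y = periodicOrbit f x} : Finset α) =
      (range n).image (f^[·] x) := by
  have hxp : x ∈ periodicPts f := minimalPeriod_pos_iff_mem_periodicPts.1 (hx ▸ hn)
  ext y
  simp only [mem_filter_univ, mem_image, mem_range]
  constructor
  · rintro ⟨hy, hyx⟩
    have hyp : y ∈ periodicPts f := minimalPeriod_pos_iff_mem_periodicPts.1 (hy ▸ hn)
    have := hyx ▸ self_mem_periodicOrbit hyp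
    simpa only [periodicOrbit, Cycle.mem_coe_iff, List.mem_map, List.mem_range, hx] using this
  · rintro ⟨i, -, rfl⟩
    exact ⟨(minimalPeriod_apply_iterate hxp i).trans hx, periodicOrbit_apply_iterate_eq hxp i⟩

theorem dvd_card_minimalPeriod_eq {n : ℕ} (hn : 0 < n) : n ∣ #{x | minimalPeriod f x = n} := by
  rw [card_eq_sum_card_fiberwise fun x hx => mem_coe.2 (mem_image_of_mem (periodicOrbit f) hx)]
  refine dvd_sum fun o ho => ?_
  obtain ⟨x, hx, rfl⟩ := mem_image.1 ho
  have hx : minimalPeriod f x = n := (mem_filter_univ x).1 hx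
  rw [filter_filter, filter_periodicOrbit_eq_image_iterate f hn hx,
    card_image_of_injOn (by simpa [← hx] using iterate_injOn_Iio_minimalPeriod), card_range]

end Function

theorem intCast_mul_eq_zero_iff_natAbs_nsmul_eq_zero {R : Type*} [Ring R] (c : ℤ) (x : R) :
    (c : R) * x = 0 ↔ c.natAbs • x = 0 := by
  rw [nsmul_eq_mul, ← Int.cast_natCast, Int.natCast_natAbs]
  rcases abs_choice c with h | h <;> simp [h]

namespace ZMod

theorem card_intCast_mul_eq_zero (m : ℕ) [NeZero m] (c : ℤ) :
    #{x : ZMod m | (c : ZMod m) * x = 0} = Int.gcd c m := by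
  calc #{x : ZMod m | (c : ZMod m) * x = 0}
      = Nat.card (nsmulAddMonoidHom (α := ZMod m) c.natAbs).ker := by
        rw [← Fintype.card_subtype, ← Nat.card_eq_fintype_card]
        exact Nat.card_congr (Equiv.subtypeEquivRight fun x =>
          intCast_mul_eq_zero_iff_natAbs_nsmul_eq_zero c x)
    _ = Int.gcd c m := by
        rw [IsAddCyclic.card_nsmulAddMonoidHom_ker, Nat.card_zmod, Int.gcd, Nat.gcd_comm]
        rfl

theorem card_isPeriodicPt_intCast_mul (m : ℕ) [NeZero m] (k : ℤ) (j : ℕ) :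
    #{x : ZMod m | IsPeriodicPt ((k : ZMod m) * ·) j x} = Int.gcd (1 - k ^ j) m := by
  rw [← card_intCast_mul_eq_zero]
  refine congrArg Finset.card (filter_congr fun x _ => ?_)
  rw [IsPeriodicPt, IsFixedPt, mul_left_iterate]
  push_cast
  rw [sub_mul, one_mul, sub_eq_zero, eq_comm]

end ZMod

open ArithmeticFunction in
theorem gcd_one_sub_pow_congruence_general (k : ℤ) (m : ℕ) (hm : 0 < m)
    (n : ℕ) :
    (n : ℤ) ∣ ∑ d ∈ n.divisors,
      (moebius d) * (Int.gcd (1 - k ^ (n / d)) (m : ℤ) : ℤ) := by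
  have : NeZero m := ⟨hm.ne'⟩
  rcases n.eq_zero_or_pos with rfl | hn
  · simp
  set T : ZMod m → ZMod m := ((k : ZMod m) * ·)
  have hfix (j : ℕ) (hj : 0 < j) :
      ∑ d ∈ j.divisors, (#{x | minimalPeriod T x = d} : ℤ) = Int.gcd (1 - k ^ j) m :=
    mod_cast (card_isPeriodicPt_eq_sum_card_minimalPeriod_eq T hj).symm.trans
      (ZMod.card_isPeriodicPt_intCast_mul m k j)
  have hinv := sum_eq_iff_sum_smul_moebius_eq.1 hfix n hn
  simp only [smul_eq_mul] at hinv
  rw [← Nat.sum_divisorsAntidiagonal (fun i j => (moebius i : ℤ) * Int.gcd (1 - k ^ j) m), hinv]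
  exact_mod_cast dvd_card_minimalPeriod_eq T hn

open ArithmeticFunction in
/-- For every integer `k` with `|k| ≠ 1`, every positive integer `m` and
every positive natural number `n`: `Σ_{d∣n} μ(d)·gcd(1 − k^{n/d}, m) ≡ 0 mod n`. -/
theorem gcd_one_sub_pow_congruence (k : ℤ) (hk : k.natAbs ≠ 1) (m : ℕ) (hm : 0 < m)
    (n : ℕ) (hn : 0 < n) :
    (n : ℤ) ∣ ∑ d ∈ n.divisors,
      (moebius d) * (Int.gcd (1 - k ^ (n / d)) (m : ℤ) : ℤ) :=
  gcd_one_sub_pow_congruence_general k m hm n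
end

section
/- Let m be a positive integer and d an integer with gcd(d,m) = 1 and |d| ≠ 1. For each divisor s of m let φ_d(s) denote the order of the multiplicative subgroup generated by d in (ℤ/sℤ)^× (the multiplicative order of d mod s), and let φ denote the Euler totient function. For 1 ≤ t ≤ φ_d(m) define a(t) = Σ_{s∣m, φ_d(m) ∣ t·φ_d(s)} φ(s)/φ_d(s). Then each a(t) is a natural number, and for every n ≥ 1: gcd(1 − d^n, m) = Σ_{t=1}^{φ_d(m)} a(t)·exp(2πi·n·t/φ_d(m)). -/
/-!
For `s ∣ m` we have `s ∣ 1 - dⁿ` iff `ord_s(d) ∣ n`, so `∑_{s ∣ g} φ(s) = g` turns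
`g = gcd(1 - dⁿ, m)` into `∑_{s ∣ m, ord_s(d) ∣ n} φ(s)`. Since `ord_s(d) ∣ φ_d(m)`, the indicator
`[ord_s(d) ∣ n]` is the average of `ζⁿ` over the `ord_s(d)`-th roots of unity `ζ`, which are the
`exp(2πit/φ_d(m))` with `φ_d(m) ∣ t·ord_s(d)`; exchanging the two sums yields the coefficients
`a(t)`, natural numbers because `ord_s(d) ∣ φ(s)`.
-/

open Finset Complex
open scoped Real

theorem natCast_dvd_one_sub_pow_iff_orderOf_dvd (d : ℤ) (s n : ℕ) :
    (s : ℤ) ∣ 1 - d ^ n ↔ orderOf (d : ZMod s) ∣ n := by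
  rw [orderOf_dvd_iff_pow_eq_one, ← ZMod.intCast_zmod_eq_zero_iff_dvd, Int.cast_sub, Int.cast_one,
    Int.cast_pow, sub_eq_zero, eq_comm]

theorem gcd_one_sub_pow_eq_sum_totient {m : ℕ} (hm : m ≠ 0) (d : ℤ) (n : ℕ) :
    Int.gcd (1 - d ^ n) m = ∑ s ∈ m.divisors with orderOf (d : ZMod s) ∣ n, s.totient := by
  have hgm : Int.gcd (1 - d ^ n) m ∣ m := Int.natCast_dvd_natCast.mp (Int.gcd_dvd_right _ _)
  rw [← Nat.sum_totient (Int.gcd _ _), ← Nat.divisors_filter_dvd_of_dvd hm hgm]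
  refine sum_congr (filter_congr fun s hs => ?_) fun _ _ => rfl
  rw [← natCast_dvd_one_sub_pow_iff_orderOf_dvd, ← Int.natCast_dvd_natCast, Int.dvd_coe_gcd_iff,
    and_iff_left (Int.natCast_dvd_natCast.mpr (Nat.dvd_of_mem_divisors hs))]

theorem orderOf_intCast_zmod_dvd_totient {d : ℤ} {s : ℕ} (h : IsCoprime d s) :
    orderOf (d : ZMod s) ∣ s.totient := by
  apply orderOf_dvd_of_pow_eq_one
  have := congrArg Units.val (ZMod.pow_totient (ZMod.unitOfIsCoprime d h))
  rwa [Units.val_pow_eq_pow_val, ZMod.coe_unitOfIsCoprime, Units.val_one] at this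

theorem orderOf_intCast_zmod_dvd_of_dvd (d : ℤ) {s m : ℕ} (h : s ∣ m) :
    orderOf (d : ZMod s) ∣ orderOf (d : ZMod m) := by
  simpa using orderOf_map_dvd (ZMod.castHom h (ZMod s)).toMonoidHom (d : ZMod m)

theorem sum_Icc_exp_two_pi_I_mul_div {N : ℕ} (hN : N ≠ 0) (n : ℕ) :
    ∑ j ∈ Icc 1 N, exp (2 * π * I * n * j / N) = if N ∣ n then (N : ℂ) else 0 := by
  set x := exp (2 * π * I / N) ^ n
  have hterm (j : ℕ) : exp (2 * π * I * n * j / N) = x ^ j := by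
    simp only [x, ← Complex.exp_nat_mul]
    ring_nf
  have hx_one : x = 1 ↔ N ∣ n := (isPrimitiveRoot_exp N hN).pow_eq_one_iff_dvd n
  have hx_pow : x ^ N = 1 := by
    rw [pow_right_comm, (isPrimitiveRoot_exp N hN).pow_eq_one, one_pow]
  simp_rw [hterm]
  split_ifs with hNn
  · simp [hx_one.mpr hNn]
  · rw [← Ico_add_one_right_eq_Icc, sum_Ico_eq_sum_range, Nat.add_sub_cancel]
    simp_rw [pow_add, pow_one, ← mul_sum, geom_sum_eq (mt hx_one.mp hNn), hx_pow]
    simp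

theorem sum_Icc_ite_dvd {M : Type*} [AddCommMonoid M] (f : ℕ → M) {g : ℕ} (hg : g ≠ 0) (N : ℕ) :
    ∑ t ∈ Icc 1 (g * N), (if g ∣ t then f t else 0) = ∑ j ∈ Icc 1 N, f (g * j) := by
  have hg_pos := Nat.pos_of_ne_zero hg
  rw [← sum_filter, ← sum_image fun _ _ _ _ h => Nat.eq_of_mul_eq_mul_left hg_pos h]
  congr 1
  ext t
  simp only [mem_filter, mem_Icc, mem_image]
  constructor
  · rintro ⟨⟨h1, h2⟩, j, rfl⟩
    exact ⟨j, ⟨Nat.pos_of_ne_zero (by rintro rfl; simp at h1),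
      Nat.le_of_mul_le_mul_left h2 hg_pos⟩, rfl⟩
  · rintro ⟨j, ⟨h1, h2⟩, rfl⟩
    exact ⟨⟨Nat.one_le_iff_ne_zero.mpr (mul_ne_zero hg (by omega)), Nat.mul_le_mul_left g h2⟩,
      dvd_mul_right g j⟩

theorem sum_Icc_ite_dvd_mul_exp {N D : ℕ} (hD : D ≠ 0) (hND : N ∣ D) (n : ℕ) :
    ∑ t ∈ Icc 1 D, (if D ∣ t * N then exp (2 * π * I * n * t / D) else 0) =
      if N ∣ n then (N : ℂ) else 0 := by
  obtain ⟨g, rfl⟩ := hND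
  have hN : N ≠ 0 := left_ne_zero_of_mul hD
  have hg : g ≠ 0 := right_ne_zero_of_mul hD
  simp_rw [mul_comm N g, Nat.mul_dvd_mul_iff_right (Nat.pos_of_ne_zero hN)]
  rw [sum_Icc_ite_dvd _ hg, ← sum_Icc_exp_two_pi_I_mul_div hN]
  refine sum_congr rfl fun j _ => congrArg Complex.exp ?_
  push_cast
  field_simp

theorem sum_Icc_ite_dvd_mul_div_mul_exp {N D : ℕ} (hD : D ≠ 0) (hND : N ∣ D) (c : ℂ) (n : ℕ) :
    ∑ t ∈ Icc 1 D, (if D ∣ t * N then c / N else 0) * exp (2 * π * I * n * t / D) =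
      if N ∣ n then c else 0 := by
  have hN : (N : ℂ) ≠ 0 := Nat.cast_ne_zero.mpr (ne_zero_of_dvd_ne_zero hD hND)
  simp_rw [ite_mul, zero_mul, ← mul_ite_zero, ← mul_sum, sum_Icc_ite_dvd_mul_exp hD hND, mul_ite,
    mul_zero, div_mul_cancel₀ c hN]

theorem gcd_one_sub_pow_fourier_expansion_general (m : ℕ) (hm : 0 < m) (d : ℤ)
    (hcop : Int.gcd d (m : ℤ) = 1)
    (od : ℕ → ℕ) (hod : ∀ s : ℕ, od s = orderOf ((d : ZMod s)))
    (a : ℕ → ℂ)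
    (ha : ∀ t : ℕ, a t = ∑ s ∈ m.divisors,
      if od m ∣ t * od s then (Nat.totient s : ℂ) / (od s : ℂ) else 0) :
    (∀ t ∈ Finset.Icc 1 (od m), ∃ k : ℕ, a t = (k : ℂ)) ∧
    ∀ n : ℕ, 1 ≤ n →
      (Int.gcd (1 - d ^ n) (m : ℤ) : ℂ) =
        ∑ t ∈ Finset.Icc 1 (od m),
          a t * Complex.exp (2 * Real.pi * Complex.I * (n : ℂ) * (t : ℂ) / (od m : ℂ)) := by
  have hod_dvd_totient (s) (hs : s ∈ m.divisors) : od s ∣ s.totient := by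
    rw [hod]
    exact orderOf_intCast_zmod_dvd_totient <| (Int.isCoprime_iff_gcd_eq_one.mpr hcop)
      |>.of_isCoprime_of_dvd_right (Int.natCast_dvd_natCast.mpr (Nat.dvd_of_mem_divisors hs))
  have hod_ne_zero (s) (hs : s ∈ m.divisors) : od s ≠ 0 :=
    ne_zero_of_dvd_ne_zero (Nat.totient_pos.mpr (Nat.pos_of_mem_divisors hs)).ne'
      (hod_dvd_totient s hs)
  have hod_dvd (s) (hs : s ∈ m.divisors) : od s ∣ od m := by
    rw [hod, hod]
    exact orderOf_intCast_zmod_dvd_of_dvd d (Nat.dvd_of_mem_divisors hs)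
  have hod_m : od m ≠ 0 := hod_ne_zero m (Nat.mem_divisors_self m hm.ne')
  refine ⟨fun t _ => ⟨∑ s ∈ m.divisors with od m ∣ t * od s, s.totient / od s, ?_⟩, fun n _ => ?_⟩
  · rw [ha, ← sum_filter, Nat.cast_sum]
    refine sum_congr rfl fun s hs => ?_
    have hs := (mem_filter.mp hs).1
    rw [Nat.cast_div (hod_dvd_totient s hs) (Nat.cast_ne_zero.mpr (hod_ne_zero s hs))]
  · simp_rw [ha, sum_mul]
    rw [sum_comm, gcd_one_sub_pow_eq_sum_totient hm.ne', Nat.cast_sum, sum_filter]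
    refine sum_congr rfl fun s hs => ?_
    rw [sum_Icc_ite_dvd_mul_div_mul_exp hod_m (hod_dvd s hs), hod]

/-- Let `m > 0` and `d` an integer with `gcd(d,m) = 1` and `|d| ≠ 1`. For
`s ∣ m` let `φ_d(s)` be the multiplicative order of `d` mod `s` and `φ` the Euler totient,
and for `1 ≤ t ≤ φ_d(m)` set `a(t) = Σ_{s∣m, φ_d(m) ∣ t·φ_d(s)} φ(s)/φ_d(s)`. Then each
`a(t)` is a natural number and for every `n ≥ 1`,
`gcd(1 − dⁿ, m) = Σ_{t=1}^{φ_d(m)} a(t)·exp(2πint/φ_d(m))`. -/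
theorem gcd_one_sub_pow_fourier_expansion (m : ℕ) (hm : 0 < m) (d : ℤ)
    (hcop : Int.gcd d (m : ℤ) = 1) (hd : d.natAbs ≠ 1)
    (od : ℕ → ℕ) (hod : ∀ s : ℕ, od s = orderOf ((d : ZMod s)))
    (a : ℕ → ℂ)
    (ha : ∀ t : ℕ, a t = ∑ s ∈ m.divisors,
      if od m ∣ t * od s then (Nat.totient s : ℂ) / (od s : ℂ) else 0) :
    (∀ t ∈ Finset.Icc 1 (od m), ∃ k : ℕ, a t = (k : ℂ)) ∧
    ∀ n : ℕ, 1 ≤ n →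
      (Int.gcd (1 - d ^ n) (m : ℤ) : ℂ) =
        ∑ t ∈ Finset.Icc 1 (od m),
          a t * Complex.exp (2 * Real.pi * Complex.I * (n : ℂ) * (t : ℂ) / (od m : ℂ)) :=
  gcd_one_sub_pow_fourier_expansion_general m hm d hcop od hod a ha
end

section
/- Let m be a positive integer and let N assign to each divisor d of m a natural number N_d; extend N to all positive integers j by N_j := N_{gcd(j,m)} (equivalently: N_{j+m} = N_j for all j, and N_{d·i} = N_d whenever d ∣ m and gcd(i, m/d) = 1). For each divisor d of m set P(d) = Σ_{d₁∣d} μ(d₁)·N_{d/d₁}. Then for every complex z with |z| < 1: Σ_{j≥1} N_{gcd(j,m)}·z^j/j = −Σ_{d∣m} (P(d)/d)·Log(1 − z^d), where Log is the principal branch of the complex logarithm; equivalently, exp(Σ_{j≥1} N_j z^j/j)^m = ∏_{d∣m} (1 − z^d)^{−m·P(d)/d}, where each exponent m·P(d)/d is an integer. -/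
/-!
Since `N n = N (gcd n m)`, Möbius inversion gives `N n = ∑_{d ∣ m, d ∣ n} P d`. The series
therefore splits into finitely many series, one for each `d ∣ m`, running over the multiples
of `d`, and `∑_{d ∣ n} z^n/n = -log (1 - z^d)/d` for `‖z‖ < 1`. Multiplying by `m` makes every
coefficient `m P(d)/d` an integer `k`, and `exp (k log w) = w^k` gives the product formula.
-/

open ArithmeticFunction Complex

theorem Nat.divisors_gcd {n m : ℕ} (hn : n ≠ 0) (hm : m ≠ 0) :
    (n.gcd m).divisors = {e ∈ m.divisors | e ∣ n} := by
  ext e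
  simp [Nat.dvd_gcd_iff, hn, hm, and_comm]

theorem sum_divisors_eq_of_eq_sum_moebius {N P : ℕ → ℤ}
    (hP : ∀ d, P d = ∑ d₁ ∈ d.divisors, moebius d₁ * N (d / d₁)) {n : ℕ} (hn : 0 < n) :
    ∑ e ∈ n.divisors, P e = N n := by
  refine sum_eq_iff_sum_mul_moebius_eq.mpr (fun d _ => ?_) n hn
  simp only [Int.cast_id, hP, Nat.sum_divisorsAntidiagonal (f := fun a b => moebius a * N b)]

theorem norm_pow_lt_one {α : Type*} [SeminormedRing α] {z : α} (hz : ‖z‖ < 1) {e : ℕ}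
    (he : e ≠ 0) : ‖z ^ e‖ < 1 :=
  (norm_pow_le' z (Nat.pos_of_ne_zero he)).trans_lt (pow_lt_one₀ (norm_nonneg z) hz he)

theorem Complex.hasSum_ite_dvd_neg_log {z : ℂ} (hz : ‖z‖ < 1) {e : ℕ} (he : e ≠ 0) :
    HasSum (fun n : ℕ => if e ∣ n then z ^ n / n else 0) (-log (1 - z ^ e) / e) := by
  have hvanish : ∀ n ∉ Set.range (e * ·), (if e ∣ n then z ^ n / n else 0) = 0 :=
    fun n hn => if_neg fun ⟨k, hk⟩ => hn ⟨k, hk.symm⟩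
  refine ((mul_right_injective₀ he).hasSum_iff hvanish).mp ?_
  refine ((hasSum_taylorSeries_neg_log (norm_pow_lt_one hz he)).div_const (e : ℂ)).congr_fun
    fun k => ?_
  simp [pow_mul, div_div, mul_comm]

theorem Complex.exp_neg_div_mul_log {k d : ℤ} (hdk : d ∣ k) {w : ℂ} (hw : w ≠ 0) :
    exp (-((k : ℂ) / d * log w)) = w ^ (-(k / d)) := by
  obtain ⟨c, rfl⟩ := hdk
  rcases eq_or_ne d 0 with rfl | hd
  · simp
  rw [Int.mul_ediv_cancel_left _ hd, Int.cast_mul, mul_div_cancel_left₀ _ (by exact_mod_cast hd),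
    ← neg_mul, ← Int.cast_neg, exp_int_mul, exp_log hw]

section PeriodicSequence

variable {m : ℕ} {N P : ℕ → ℤ}

theorem eq_sum_divisors_dvd_of_eq_gcd (hm : m ≠ 0) (hN : ∀ n, 0 < n → N n = N (n.gcd m))
    (hP : ∀ d, P d = ∑ d₁ ∈ d.divisors, moebius d₁ * N (d / d₁)) {n : ℕ} (hn : n ≠ 0) :
    N n = ∑ e ∈ m.divisors with e ∣ n, P e := by
  rw [hN n (Nat.pos_of_ne_zero hn), ← Nat.divisors_gcd hn hm,
    sum_divisors_eq_of_eq_sum_moebius hP (Nat.gcd_pos_of_pos_left m (Nat.pos_of_ne_zero hn))]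

theorem hasSum_mul_pow_div_of_eq_gcd (hm : m ≠ 0) (hN : ∀ n, 0 < n → N n = N (n.gcd m))
    (hP : ∀ d, P d = ∑ d₁ ∈ d.divisors, moebius d₁ * N (d / d₁)) {z : ℂ} (hz : ‖z‖ < 1) :
    HasSum (fun n : ℕ => (N n : ℂ) * z ^ n / n)
      (-∑ d ∈ m.divisors, (P d : ℂ) / d * log (1 - z ^ d)) := by
  have hcoeff : ∀ n : ℕ, (N n : ℂ) * z ^ n / n =
      ∑ d ∈ m.divisors, (P d : ℂ) * if d ∣ n then z ^ n / n else 0 := by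
    intro n
    rcases eq_or_ne n 0 with rfl | hn
    · simp
    rw [eq_sum_divisors_dvd_of_eq_gcd hm hN hP hn, Int.cast_sum, Finset.sum_mul, Finset.sum_div,
      Finset.sum_filter]
    refine Finset.sum_congr rfl fun d _ => ?_
    split_ifs <;> simp [mul_div_assoc]
  have hterms := hasSum_sum (s := m.divisors) fun d hd =>
    (hasSum_ite_dvd_neg_log hz (Nat.pos_of_mem_divisors hd).ne').mul_left (P d : ℂ)
  have hvalue : ∑ d ∈ m.divisors, (P d : ℂ) * (-log (1 - z ^ d) / d) =
      -∑ d ∈ m.divisors, (P d : ℂ) / d * log (1 - z ^ d) := by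
    rw [← Finset.sum_neg_distrib]
    exact Finset.sum_congr rfl fun d _ => by ring
  exact hvalue ▸ hterms.congr_fun hcoeff

end PeriodicSequence

open ArithmeticFunction in
/-- Let `m > 0` and let `N : ℕ → ℕ` satisfy `N j = N (gcd j m)` for all
`j ≥ 1`, and for `d ∣ m` set `P(d) = Σ_{d₁∣d} μ(d₁)·N(d/d₁)`. Then for `|z| < 1`:
`Σ_{j≥1} N_j z^j/j = −Σ_{d∣m} (P(d)/d)·Log(1 − z^d)` (principal branch), equivalently
`exp(Σ_{j≥1} N_j z^j/j)^m = ∏_{d∣m} (1 − z^d)^{−m·P(d)/d}`, where each exponent `m·P(d)/d`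
is an integer. -/
theorem periodic_nielsen_zeta_radical_of_rational (m : ℕ) (hm : 0 < m) (N : ℕ → ℕ)
    (hN : ∀ j : ℕ, 1 ≤ j → N j = N (Nat.gcd j m))
    (P : ℕ → ℤ)
    (hP : ∀ d : ℕ, P d = ∑ d₁ ∈ d.divisors, (moebius d₁) * (N (d / d₁) : ℤ)) :
    (∀ d ∈ m.divisors, (d : ℤ) ∣ (m : ℤ) * P d) ∧
    ∀ z : ℂ, ‖z‖ < 1 →
      (∑' j : ℕ, (N (j + 1) : ℂ) * z ^ (j + 1) / ((j : ℂ) + 1)) =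
          -∑ d ∈ m.divisors, ((P d : ℂ) / (d : ℂ)) * Complex.log (1 - z ^ d) ∧
        Complex.exp (∑' j : ℕ, (N (j + 1) : ℂ) * z ^ (j + 1) / ((j : ℂ) + 1)) ^ m =
          ∏ d ∈ m.divisors, (1 - z ^ d) ^ (-(((m : ℤ) * P d) / (d : ℤ))) := by
  have hdvd : ∀ d ∈ m.divisors, (d : ℤ) ∣ (m : ℤ) * P d := fun d hd =>
    dvd_mul_of_dvd_left (Int.natCast_dvd_natCast.mpr (Nat.dvd_of_mem_divisors hd)) _
  refine ⟨hdvd, fun z hz => ?_⟩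
  have hseries := hasSum_mul_pow_div_of_eq_gcd (N := fun n => (N n : ℤ)) hm.ne'
    (fun n hn => congrArg _ (hN n hn)) hP hz
  have hsum := ((hasSum_nat_add_iff (f := fun n : ℕ => (N n : ℂ) * z ^ n / n) 1).mpr
    (by simpa using hseries)).tsum_eq
  push_cast at hsum
  refine ⟨hsum, ?_⟩
  rw [hsum, ← exp_nat_mul, mul_neg, Finset.mul_sum, ← Finset.sum_neg_distrib, exp_sum]
  refine Finset.prod_congr rfl fun d hd => ?_
  have hne : 1 - z ^ d ≠ 0 := sub_ne_zero.mpr fun h =>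
    (norm_pow_lt_one hz (Nat.pos_of_mem_divisors hd).ne').ne (by rw [← h, norm_one])
  rw [← exp_neg_div_mul_log (hdvd d hd) hne]
  push_cast
  ring_nf
end
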